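/- arXiv:2202.02185 — 11 statements merged into one kernel-verified Lean document; each statement's English description precedes it below -/
import Mathlib

section
/- Let F : GF(2^n) → GF(2^n) be a function, c ∈ GF(2^n) with c ≠ 0, a ∈ GF(2^n) with a ≠ 0, and b ∈ GF(2^n). Then the number of x ∈ GF(2^n) with F(x+a) - c·F(x) = b equals the number of x ∈ GF(2^n) with F(x+a) - c⁻¹·F(x) = b·c⁻¹. -/
lemma aux_key {K : Type*} [Field K] [CharP K 2] (c u v b : K) (hc : c ≠ 0)
    (h : v - c * u = b) : u - c⁻¹ * v = b * c⁻¹ := by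
  rw [CharTwo.sub_eq_add] at h ⊢
  field_simp
  linear_combination h

theorem stmt_0 (n : ℕ) (F : GaloisField 2 n → GaloisField 2 n)
    (c a b : GaloisField 2 n) (hc : c ≠ 0) (ha : a ≠ 0) :
    Nat.card {x : GaloisField 2 n // F (x + a) - c * F x = b} =
      Nat.card {x : GaloisField 2 n // F (x + a) - c⁻¹ * F x = b * c⁻¹} := by
  haveI : Fact (Nat.Prime 2) := ⟨Nat.prime_two⟩
  have haa : ∀ y : GaloisField 2 n, y + a + a = y := by
    intro y
    rw [add_assoc, CharTwo.add_self_eq_zero, add_zero]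
  apply Nat.card_congr
  refine ⟨fun x => ⟨x.1 + a, ?_⟩, fun y => ⟨y.1 + a, ?_⟩, fun x => ?_, fun y => ?_⟩
  · rw [haa]
    exact aux_key c (F x.1) (F (x.1 + a)) b hc x.2
  · rw [haa]
    have := aux_key c⁻¹ (F y.1) (F (y.1 + a)) (b * c⁻¹) (inv_ne_zero hc) y.2
    rwa [inv_inv, mul_assoc, inv_mul_cancel₀ hc, mul_one] at this
  · ext; exact haa _
  · ext; exact haa _
end

section
/- Let F be a permutation of GF(2^n) and c ∈ GF(2^n) with c ≠ 0. Then the c-differential uniformity of F equals the c⁻¹-differential uniformity of F. -/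
/-- The number of solutions `x` of `F(x+a) + c·F(x) = b`. -/
noncomputable def cdCount (n : ℕ) (F : GaloisField 2 n → GaloisField 2 n)
    (c a b : GaloisField 2 n) : ℕ :=
  Nat.card {x : GaloisField 2 n // F (x + a) + c * F x = b}

/-- The `c`-differential uniformity of `F` (requiring `a ≠ 0` only when `c = 1`). -/
noncomputable def cdu (n : ℕ) (F : GaloisField 2 n → GaloisField 2 n)
    (c : GaloisField 2 n) : ℕ :=
  sSup {k : ℕ | ∃ a b : GaloisField 2 n, (c = 1 → a ≠ 0) ∧ k = cdCount n F c a b}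

lemma cdCount_inv (n : ℕ) (F : GaloisField 2 n → GaloisField 2 n)
    (c a b : GaloisField 2 n) (hc : c ≠ 0) :
    cdCount n F c a b = cdCount n F c⁻¹ a (c⁻¹ * b) := by
  haveI : CharP (GaloisField 2 n) 2 := inferInstance
  apply Nat.card_congr
  have key : ∀ x : GaloisField 2 n,
      F (x + a) + c * F x = b ↔ F (x + a + a) + c⁻¹ * F (x + a) = c⁻¹ * b := by
    intro x
    rw [add_assoc, CharTwo.add_self_eq_zero, add_zero]
    constructor
    · intro h
      field_simp
      linear_combination h
    · intro h
      field_simp at h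
      linear_combination h
  exact
    { toFun := fun x => ⟨x.1 + a, (key x.1).mp x.2⟩
      invFun := fun y => ⟨y.1 + a, by
        have := y.2
        have h2 : y.1 + a + a = y.1 := by
          rw [add_assoc, CharTwo.add_self_eq_zero, add_zero]
        exact (key (y.1 + a)).mpr (by rwa [h2])⟩
      left_inv := fun x => by
        ext; simp [add_assoc, CharTwo.add_self_eq_zero]
      right_inv := fun y => by
        ext; simp [add_assoc, CharTwo.add_self_eq_zero] }

theorem stmt_1 (n : ℕ) (F : GaloisField 2 n → GaloisField 2 n)
    (hF : Function.Bijective F) (c : GaloisField 2 n) (hc : c ≠ 0) :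
    cdu n F c = cdu n F c⁻¹ := by
  unfold cdu
  congr 1
  ext k
  have hinv : c⁻¹ = 1 ↔ c = 1 := inv_eq_one
  constructor
  · rintro ⟨a, b, ha, rfl⟩
    exact ⟨a, c⁻¹ * b, fun h => ha (hinv.mp h), cdCount_inv n F c a b hc⟩
  · rintro ⟨a, b, ha, rfl⟩
    refine ⟨a, c * b, fun h => ha (hinv.mpr h), ?_⟩
    have := cdCount_inv n F c a (c * b) hc
    rw [inv_mul_cancel_left₀ hc] at this
    exact this.symm
end

section
/- Let F and G be permutations of GF(2^n) that agree outside a nonempty finite set P ⊆ GF(2^n), and let c ∈ GF(2^n) with c ≠ 1. Then the c-differential uniformity of F is at most the c-differential uniformity of G plus the cardinality of P. -/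
namespace CDifferential

variable {R : Type*} [CommRing R]

def solutions (F : R → R) (c a b : R) : Set R :=
  {x | F (x + a) + c * F x = b}

theorem mem_or_add_mem_of_mem_solutions_diff {F G : R → R} {P : Set R}
    (hFG : ∀ x ∉ P, F x = G x) {c a b x : R}
    (hx : x ∈ solutions F c a b \ solutions G c a b) : x ∈ P ∨ x + a ∈ P := by
  by_contra! h
  exact hx.2 (by rw [solutions, Set.mem_ofPred_eq, ← hFG x h.1, ← hFG _ h.2]; exact hx.1)

variable [NoZeroDivisors R] [CharP R 2]

theorem eq_zero_of_mem_solutions_of_add_mem {F : R → R} (hF : Function.Injective F)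
    {c : R} (hc : c ≠ 1) {a b x : R} (hx : x ∈ solutions F c a b)
    (hxa : x + a ∈ solutions F c a b) : a = 0 := by
  simp only [solutions, Set.mem_ofPred_eq, add_assoc, CharTwo.add_self_eq_zero, add_zero]
    at hx hxa
  have hprod : (1 - c) * (F (x + a) - F x) = 0 := by linear_combination hx - hxa
  rcases mul_eq_zero.mp hprod with h | h
  · exact absurd (sub_eq_zero.mp h).symm hc
  · exact add_eq_left.mp (hF (sub_eq_zero.mp h))

theorem ncard_solutions_le_add_card [Finite R] {F G : R → R} (hF : Function.Injective F)
    {P : Finset R} (hFG : ∀ x ∉ P, F x = G x) {c : R} (hc : c ≠ 1) (a b : R) :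
    (solutions F c a b).ncard ≤ (solutions G c a b).ncard + P.card := by
  classical
  set S := solutions F c a b
  set T := solutions G c a b
  let f : R → R := fun x => if x ∈ P then x else x + a
  have hmaps : ∀ x ∈ S \ T, f x ∈ (P : Set R) := by
    intro x hx
    by_cases hxP : x ∈ P
    · simp [f, hxP]
    · simpa [f, hxP] using (mem_or_add_mem_of_mem_solutions_diff hFG hx).resolve_left hxP
  have hshift : ∀ y ∈ S \ T, y + a ∈ S \ T → y + a = y := fun y hy hya => by
    simp [eq_zero_of_mem_solutions_of_add_mem hF hc hy.1 hya.1]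
  have hinj : Set.InjOn f (S \ T) := by
    intro x hx y hy hxy
    by_cases hxP : x ∈ P <;> by_cases hyP : y ∈ P <;> simp only [f, hxP, hyP, if_true,
      if_false] at hxy
    · exact hxy
    · subst hxy; exact hshift y hy hx
    · subst hxy; exact (hshift x hx hy).symm
    · exact add_right_cancel hxy
  calc S.ncard = (S ∩ T).ncard + (S \ T).ncard :=
        (Set.ncard_inter_add_ncard_sdiff_eq_ncard S T).symm
    _ ≤ T.ncard + (P : Set R).ncard :=
        add_le_add (Set.ncard_le_ncard Set.inter_subset_right)
          (Set.ncard_le_ncard_of_injOn f hmaps hinj)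
    _ = T.ncard + P.card := by rw [Set.ncard_coe_finset]

end CDifferential

theorem cdCount_eq_ncard_solutions (n : ℕ) (F : GaloisField 2 n → GaloisField 2 n)
    (c a b : GaloisField 2 n) : cdCount n F c a b = (CDifferential.solutions F c a b).ncard :=
  Nat.card_coe_set_eq _

theorem cdCount_le_cdu {n : ℕ} (F : GaloisField 2 n → GaloisField 2 n) {c a : GaloisField 2 n}
    (ha : c = 1 → a ≠ 0) (b : GaloisField 2 n) : cdCount n F c a b ≤ cdu n F c := by
  refine le_csSup ⟨Nat.card (GaloisField 2 n), ?_⟩ ⟨a, b, ha, rfl⟩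
  rintro k ⟨a, b, -, rfl⟩
  exact Nat.card_le_card_of_injective Subtype.val Subtype.val_injective

theorem stmt_3_general (n : ℕ) (F G : GaloisField 2 n → GaloisField 2 n)
    (hF : Function.Bijective F)
    (P : Finset (GaloisField 2 n))
    (hFG : ∀ x ∉ P, F x = G x)
    (c : GaloisField 2 n) (hc : c ≠ 1) :
    cdu n F c ≤ cdu n G c + P.card := by
  refine csSup_le' ?_
  rintro k ⟨a, b, ha, rfl⟩
  calc cdCount n F c a b ≤ cdCount n G c a b + P.card := by
        simpa only [cdCount_eq_ncard_solutions] using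
          CDifferential.ncard_solutions_le_add_card hF.injective hFG hc a b
    _ ≤ cdu n G c + P.card := Nat.add_le_add_right (cdCount_le_cdu G ha b) _

theorem stmt_3 (n : ℕ) (F G : GaloisField 2 n → GaloisField 2 n)
    (hF : Function.Bijective F) (hG : Function.Bijective G)
    (P : Finset (GaloisField 2 n)) (hP : P.Nonempty)
    (hFG : ∀ x ∉ P, F x = G x)
    (c : GaloisField 2 n) (hc : c ≠ 1) :
    cdu n F c ≤ cdu n G c + P.card :=
  stmt_3_general n F G hF P hFG c hc
end

section
/- Let F be a permutation of GF(2^n) agreeing with the inverse function Inv (where Inv(x) = x^{2^n − 2}, so Inv(0) = 0 and Inv(x) = x⁻¹ for x ≠ 0) outside a set P ⊆ GF(2^n) containing 0, and let c ∈ GF(2^n) with c ≠ 1. Then the c-differential uniformity of F is at most |P| + 2. -/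
/-!
Split the solutions `x` of `F (x + a) + c * F x = b` according to whether `x` or `x + a` lies in
`P`. Those that do inject into `P` via `x ↦ if x ∈ P then x else x + a`: a collision produces two
solutions `x` and `x + a`, and adding their equations gives `(1 + c) (F (x + a) + F x) = 0`, so
`a = 0` by injectivity of `F`. The others satisfy `(x + a)⁻¹ + c x⁻¹ = b`, so they are roots of
`b x² + (a b + 1 + c) x + c a`, which is nonzero because `c ≠ 1`; there are at most two of them.
-/

open Polynomial Finset

theorem card_le_two_of_inv_add_mul_inv_eq {K : Type*} [Field K] {a b c : K} (hc : c ≠ -1)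
    (s : Finset K) (hs : ∀ x ∈ s, x ≠ 0 ∧ x + a ≠ 0 ∧ (x + a)⁻¹ + c * x⁻¹ = b) :
    #s ≤ 2 := by
  set q : K[X] := C b * X ^ 2 + C (a * b - 1 - c) * X + C (-(c * a))
  have hq : q ≠ 0 := by
    intro h
    have hb : b = 0 := by
      simpa [q, coeff_X, coeff_C, coeff_one] using congrArg (coeff · 2) h
    have h1 : a * b - 1 - c = 0 := by
      simpa [q, coeff_X, coeff_C, coeff_one] using congrArg (coeff · 1) h
    exact hc (by linear_combination -h1 + a * hb)
  have hroots : s.val ⊆ q.roots := fun x hx => by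
    obtain ⟨hx0, hxa0, heq⟩ := hs x hx
    rw [mem_roots hq, IsRoot]
    simp only [q, eval_add, eval_mul, eval_pow, eval_C, eval_X]
    field_simp at heq
    linear_combination -heq
  exact (card_le_degree_of_subset_roots hroots).trans natDegree_quadratic_le

section CharTwo

variable {K : Type*} [Field K] [CharP K 2] {F : K → K} {c : K}

theorem Function.Injective.eq_zero_of_solution_pair (hF : F.Injective) (hc : c ≠ 1)
    {x a b : K} (hx : F (x + a) + c * F x = b) (hxa : F (x + a + a) + c * F (x + a) = b) :
    a = 0 := by
  rw [add_assoc, CharTwo.add_self_eq_zero, add_zero] at hxa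
  have h : (1 - c) * (F (x + a) - F x) = 0 := by linear_combination hx - hxa
  have hFx : F (x + a) = F x :=
    sub_eq_zero.1 ((mul_eq_zero.1 h).resolve_left (sub_ne_zero.2 hc.symm))
  exact add_eq_left.1 (hF hFx)

theorem card_le_card_of_forall_solution_mem_or_add_mem (hF : F.Injective) (hc : c ≠ 1) {a b : K}
    (P s : Finset K) (hs : ∀ x ∈ s, F (x + a) + c * F x = b ∧ (x ∈ P ∨ x + a ∈ P)) :
    #s ≤ #P := by
  classical
  refine card_le_card_of_injOn (fun x => if x ∈ P then x else x + a) ?_ ?_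
  · intro x hx
    by_cases hxP : x ∈ P
    · simp [hxP]
    · simpa [hxP] using (hs x hx).2.resolve_left hxP
  · intro x hx y hy hxy
    have hsol : ∀ z ∈ s, F (z + a) + c * F z = b := fun z hz => (hs z hz).1
    by_cases hxP : x ∈ P <;> by_cases hyP : y ∈ P <;>
      simp only [hxP, hyP, if_true, if_false] at hxy
    · exact hxy
    · have ha := hF.eq_zero_of_solution_pair hc (hsol y hy) (hxy ▸ hsol x hx)
      simpa [ha] using hxy
    · have ha := hF.eq_zero_of_solution_pair hc (hsol x hx) (hxy ▸ hsol y hy)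
      simpa [ha] using hxy
    · exact add_right_cancel hxy

theorem card_solutions_le_card_add_two [Fintype K] [DecidableEq K] (hF : F.Injective)
    {P : Finset K} (h0 : 0 ∈ P) (hFInv : ∀ x ∉ P, F x = x⁻¹) (hc : c ≠ 1) (a b : K) :
    #{x | F (x + a) + c * F x = b} ≤ #P + 2 := by
  rw [← card_filter_add_card_filter_not (fun x => x ∈ P ∨ x + a ∈ P)]
  refine add_le_add
    (card_le_card_of_forall_solution_mem_or_add_mem hF hc P _ fun x hx => by simpa using hx) ?_
  refine card_le_two_of_inv_add_mul_inv_eq (a := a) (b := b) (by rwa [CharTwo.neg_eq]) _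
    fun x hx => ?_
  simp only [mem_filter, mem_univ, true_and, not_or] at hx
  obtain ⟨hsol, hxP, hxaP⟩ := hx
  refine ⟨ne_of_mem_of_not_mem h0 hxP |>.symm, ne_of_mem_of_not_mem h0 hxaP |>.symm, ?_⟩
  rwa [hFInv x hxP, hFInv _ hxaP] at hsol

end CharTwo

theorem stmt_4 (n : ℕ) (F : GaloisField 2 n → GaloisField 2 n)
    (hF : Function.Bijective F)
    (P : Finset (GaloisField 2 n)) (h0 : (0 : GaloisField 2 n) ∈ P)
    (hFInv : ∀ x ∉ P, F x = x⁻¹)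
    (c : GaloisField 2 n) (hc : c ≠ 1) :
    cdu n F c ≤ P.card + 2 := by
  classical
  have : Fintype (GaloisField 2 n) := Fintype.ofFinite _
  refine csSup_le' ?_
  rintro _ ⟨a, b, -, rfl⟩
  rw [cdCount, Nat.card_eq_fintype_card, Fintype.card_subtype]
  exact card_solutions_le_card_add_two hF.injective h0 hFInv hc a b
end

section
/- Let F and F′ be permutations of GF(2^n) with F = A₁ ∘ F′ ∘ A₂, where A₁(x) = u₁x + v₁ and A₂(x) = u₂x + v₂ with u₁, u₂ ∈ GF(2^n) nonzero. Then for every c ∈ GF(2^n), the c-differential uniformity of F equals that of F′. -/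
/-! The substitution `y = u₂ x + v₂` turns the solutions of `F(x+a) + cF(x) = b` bijectively into
those of `F'(y + u₂a) + cF'(y) = u₁⁻¹(b - (1+c)v₁)`. Since `(a, b) ↦ (u₂a, u₁⁻¹(b - (1+c)v₁))`
preserves the condition `a ≠ 0`, every count attained by `F` is attained by `F'`, and the converse
follows because `F'` is in turn an affine transform of `F`. -/

section AffineEquivalence

variable {K : Type*} [Field K] {F F' : K → K} {u₁ v₁ u₂ v₂ : K}

theorem affine_comp_symm (hu₁ : u₁ ≠ 0) (hu₂ : u₂ ≠ 0)
    (hcomp : ∀ x, F x = u₁ * F' (u₂ * x + v₂) + v₁) :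
    ∀ y, F' y = u₁⁻¹ * F (u₂⁻¹ * y + -(u₂⁻¹ * v₂)) + -(u₁⁻¹ * v₁) := by
  intro y
  have hinv : u₂ * (u₂⁻¹ * y + -(u₂⁻¹ * v₂)) + v₂ = y := by field_simp; ring
  rw [hcomp, hinv]
  field_simp
  ring

theorem card_cdiff_solutions_eq_of_affine (hu₁ : u₁ ≠ 0) (hu₂ : u₂ ≠ 0)
    (hcomp : ∀ x, F x = u₁ * F' (u₂ * x + v₂) + v₁) (c a b : K) :
    Nat.card {x // F (x + a) + c * F x = b} =
      Nat.card {y // F' (y + u₂ * a) + c * F' y = u₁⁻¹ * (b - (1 + c) * v₁)} := by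
  refine Nat.card_congr <|
    ((Equiv.mulLeft₀ u₂ hu₂).trans (Equiv.addRight v₂)).subtypeEquiv fun x => ?_
  have hshift : u₂ * (x + a) + v₂ = u₂ * x + v₂ + u₂ * a := by ring
  simp only [Equiv.trans_apply, Equiv.mulLeft₀_apply, Equiv.coe_addRight, hcomp, hshift]
  rw [eq_inv_mul_iff_mul_eq₀ hu₁]
  constructor <;> intro h <;> linear_combination h

end AffineEquivalence

theorem cdCount_values_subset_of_affine {n : ℕ} {F F' : GaloisField 2 n → GaloisField 2 n}
    {u₁ v₁ u₂ v₂ : GaloisField 2 n} (hu₁ : u₁ ≠ 0) (hu₂ : u₂ ≠ 0)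
    (hcomp : ∀ x, F x = u₁ * F' (u₂ * x + v₂) + v₁) (c : GaloisField 2 n) :
    {k | ∃ a b, (c = 1 → a ≠ 0) ∧ k = cdCount n F c a b} ⊆
      {k | ∃ a b, (c = 1 → a ≠ 0) ∧ k = cdCount n F' c a b} := by
  rintro _ ⟨a, b, ha, rfl⟩
  exact ⟨u₂ * a, u₁⁻¹ * (b - (1 + c) * v₁), fun hc => mul_ne_zero hu₂ (ha hc),
    card_cdiff_solutions_eq_of_affine hu₁ hu₂ hcomp c a b⟩

theorem stmt_7_general (n : ℕ) (F F' : GaloisField 2 n → GaloisField 2 n)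
    (u₁ v₁ u₂ v₂ : GaloisField 2 n) (hu₁ : u₁ ≠ 0) (hu₂ : u₂ ≠ 0)
    (hcomp : ∀ x, F x = u₁ * F' (u₂ * x + v₂) + v₁) :
    ∀ c : GaloisField 2 n, cdu n F c = cdu n F' c := by
  intro c
  have hcomp' := affine_comp_symm hu₁ hu₂ hcomp
  exact congrArg sSup <| (cdCount_values_subset_of_affine hu₁ hu₂ hcomp c).antisymm
    (cdCount_values_subset_of_affine (inv_ne_zero hu₁) (inv_ne_zero hu₂) hcomp' c)

theorem stmt_7 (n : ℕ) (F F' : GaloisField 2 n → GaloisField 2 n)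
    (hF : Function.Bijective F) (hF' : Function.Bijective F')
    (u₁ v₁ u₂ v₂ : GaloisField 2 n) (hu₁ : u₁ ≠ 0) (hu₂ : u₂ ≠ 0)
    (hcomp : ∀ x, F x = u₁ * F' (u₂ * x + v₂) + v₁) :
    ∀ c : GaloisField 2 n, cdu n F c = cdu n F' c :=
  stmt_7_general n F F' u₁ v₁ u₂ v₂ hu₁ hu₂ hcomp
end

section
/- Let G be a permutation of GF(2^n) with G(x) = x for all x outside a set P of size at most m, and let c ∈ GF(2^n) with c ≠ 1. Then the c-differential uniformity of G is at most m + 1. -/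
theorem stmt_9 (n : ℕ) (G : GaloisField 2 n → GaloisField 2 n)
    (hG : Function.Bijective G) (m : ℕ)
    (P : Finset (GaloisField 2 n)) (hPm : P.card ≤ m)
    (hid : ∀ x ∉ P, G x = x)
    (c : GaloisField 2 n) (hc : c ≠ 1) :
    cdu n G c ≤ m + 1 := by
  classical
  have hchar : ∀ y : GaloisField 2 n, y + y = 0 := fun y => CharTwo.add_self_eq_zero y
  have hc1 : (1 : GaloisField 2 n) + c ≠ 0 := by
    intro h
    apply hc
    have h1 : c = -1 := eq_neg_of_add_eq_zero_right h
    rw [h1, CharTwo.neg_eq]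
  apply csSup_le'
  rintro k ⟨a, b, -, rfl⟩
  set x₀ : GaloisField 2 n := (b + a) / (1 + c) with hx₀
  -- pair lemma
  have pair : ∀ x : GaloisField 2 n, G (x + a) + c * G x = b →
      G x + c * G (x + a) = b → x + a = x := by
    intro x h1 h2
    have key : (1 + c) * (G x + G (x + a)) = 0 := by
      linear_combination h1 + h2 + hchar b
    have h3 : G x + G (x + a) = 0 := by
      rcases mul_eq_zero.mp key with h | h
      · exact absurd h hc1
      · exact h
    have h4 : G (x + a) = G x := by linear_combination h3 - hchar (G x)
    exact hG.injective h4
  -- uniqueness outside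
  have hout : ∀ x : GaloisField 2 n, G (x + a) + c * G x = b →
      x ∉ P → x + a ∉ P → x = x₀ := by
    intro x hx h1 h2
    rw [hid x h1, hid (x + a) h2] at hx
    rw [hx₀, eq_div_iff hc1]
    linear_combination hx - hchar a
  set T : Finset (GaloisField 2 n) := insert x₀ P with hT
  have hTcard : T.card ≤ m + 1 := by
    calc T.card ≤ P.card + 1 := Finset.card_insert_le _ _
    _ ≤ m + 1 := by omega
  set h : GaloisField 2 n → GaloisField 2 n :=
    fun x => if x ∈ P then x else if x + a ∈ P then x + a else x₀ with hh
  have hmem : ∀ x : GaloisField 2 n, h x ∈ T := by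
    intro x
    rw [hh]
    dsimp only
    split_ifs with h1 h2
    · exact Finset.mem_insert_of_mem h1
    · exact Finset.mem_insert_of_mem h2
    · exact Finset.mem_insert_self _ _
  have haa : ∀ x : GaloisField 2 n, x + a + a = x := by
    intro x
    rw [add_assoc, hchar, add_zero]
  have hinj : Function.Injective
      (fun x : {x : GaloisField 2 n // G (x + a) + c * G x = b} =>
        (⟨h x.1, hmem x.1⟩ : {y // y ∈ T})) := by
    rintro ⟨x, hx⟩ ⟨y, hy⟩ hfeq
    simp only [Subtype.mk.injEq] at hfeq ⊢
    rw [hh] at hfeq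
    dsimp only at hfeq
    split_ifs at hfeq with h1 h2 h3 h4 h5 h6 h7 h8
    · exact hfeq
    · -- x ∈ P, y ∉ P, y + a ∈ P : x = y + a
      have hx2 : G y + c * G (y + a) = b := by
        have := hx
        rw [hfeq, haa] at this
        exact this
      have := pair y hy hx2
      rw [hfeq, this]
    · rw [hfeq, ← hout y hy h2 h3]
    · -- x ∉ P, x + a ∈ P, y ∈ P : x + a = y
      have hy2 : G x + c * G (x + a) = b := by
        have := hy
        rw [← hfeq, haa] at this
        exact this
      have := pair x hx hy2
      rw [← hfeq, this]
    · exact add_right_cancel hfeq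
    · -- x + a = x₀ = y
      have hyx : y = x + a := by rw [hfeq, hout y hy h5 h6]
      have hy2 : G x + c * G (x + a) = b := by
        have := hy
        rw [hyx, haa] at this
        exact this
      have := pair x hx hy2
      rw [hyx, this]
    · rw [hout x hx h1 h4, hfeq]
    · -- x = x₀ = y + a
      have hxy : x = y + a := by rw [hout x hx h1 h4, hfeq]
      have hx2 : G y + c * G (y + a) = b := by
        have := hx
        rw [hxy, haa] at this
        exact this
      have := pair y hy hx2
      rw [hxy, this]
    · rw [hout x hx h1 h4, hout y hy h7 h8]
  have hle : cdCount n G c a b ≤ Nat.card {y // y ∈ T} :=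
    Nat.card_le_card_of_injective _ hinj
  have hTc : Nat.card {y // y ∈ T} = T.card := by
    rw [Nat.card_eq_fintype_card, Fintype.card_coe]
  omega
end

section
/- Let F(x) = (((x^{2^n−2} + 1)^{2^n−2} + γ)^{2^n−2}) on GF(2^n) with γ ∉ {0, 1}. Then F = A₄⁻¹ ∘ (Inv ∘ σ) ∘ A₃⁻¹ where σ is the 3-cycle permutation (0, 1, γ), A₃(x) = (x + γ)/(γ + 1), and A₄(x) = (γ+1)x + 1; equivalently, A₄ ∘ F ∘ A₃ = Inv ∘ (0,1,γ). -/
open scoped Classical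

/-- The 3-cycle `(0, 1, γ)` : sends `0 ↦ 1`, `1 ↦ γ`, `γ ↦ 0`, fixes all other points. -/
noncomputable def cyc (n : ℕ) (γ : GaloisField 2 n) :
    GaloisField 2 n → GaloisField 2 n :=
  fun x => if x = 0 then 1 else if x = 1 then γ else if x = γ then 0 else x

/-!
Over a field of characteristic 2 the composite `A₄ ∘ F₃ ∘ A₃` is a chain of Möbius maps,
`x ↦ (x + γ)/(γ + 1) ↦ (x + 1)/(x + γ) ↦ (γ + 1)x/(x + 1) ↦ x⁻¹`, valid as long as no
denominator vanishes, i.e. for `x ∉ {0, 1, γ}`. At each of these three points exactly one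
intermediate value is `0`, and the convention `0⁻¹ = 0` sends `0, 1, γ` to `1, γ⁻¹, 0`
respectively: the values of `Inv ∘ (0, 1, γ)`.
-/

namespace InvCycle

variable {K : Type*} [Field K] [CharP K 2] {γ : K}

def A₃ (γ x : K) : K := (x + γ) / (γ + 1)

def A₄ (γ x : K) : K := (γ + 1) * x + 1

def F₃ (γ x : K) : K := ((x⁻¹ + 1)⁻¹ + γ)⁻¹

lemma add_one_ne_zero_of_ne_one {x : K} (hx : x ≠ 1) : x + 1 ≠ 0 :=
  fun h => hx (CharTwo.add_eq_zero.1 h)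

lemma A₄_F₃_A₃_of_ne (hγ : γ ≠ 1) {x : K} (hx0 : x ≠ 0) (hx1 : x ≠ 1) (hxγ : x ≠ γ) :
    A₄ γ (F₃ γ (A₃ γ x)) = x⁻¹ := by
  have : γ + 1 ≠ 0 := add_one_ne_zero_of_ne_one hγ
  have : x + 1 ≠ 0 := add_one_ne_zero_of_ne_one hx1
  have : x + γ ≠ 0 := fun h => hxγ (CharTwo.add_eq_zero.1 h)
  have h2 : (2 : K) = 0 := CharTwo.two_eq_zero
  have step1 : (A₃ γ x)⁻¹ + 1 = (x + 1) / (x + γ) := by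
    rw [A₃, inv_div]; field_simp; linear_combination γ * h2
  have step2 : ((x + 1) / (x + γ))⁻¹ + γ = (γ + 1) * x / (x + 1) := by
    rw [inv_div]; field_simp; linear_combination γ * h2
  rw [A₄, F₃, step1, step2, inv_div]
  field_simp
  linear_combination x * h2

lemma A₄_F₃_A₃_zero (hγ : γ ≠ 1) (hγ0 : γ ≠ 0) : A₄ γ (F₃ γ (A₃ γ 0)) = 1 := by
  have : γ + 1 ≠ 0 := add_one_ne_zero_of_ne_one hγ
  have h2 : (2 : K) = 0 := CharTwo.two_eq_zero
  have step : (A₃ γ 0)⁻¹ + 1 = γ⁻¹ := by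
    rw [A₃, zero_add, inv_div]; field_simp; linear_combination γ * h2
  rw [A₄, F₃, step, inv_inv, CharTwo.add_self_eq_zero, inv_zero, mul_zero, zero_add]

lemma A₄_F₃_A₃_one (hγ : γ ≠ 1) (hγ0 : γ ≠ 0) : A₄ γ (F₃ γ (A₃ γ 1)) = γ⁻¹ := by
  have : γ + 1 ≠ 0 := add_one_ne_zero_of_ne_one hγ
  have h2 : (2 : K) = 0 := CharTwo.two_eq_zero
  rw [A₄, F₃, A₃, add_comm 1 γ, div_self this, inv_one, CharTwo.add_self_eq_zero, inv_zero,
    zero_add]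
  field_simp
  linear_combination γ * h2

lemma A₄_F₃_A₃_self (hγ : γ ≠ 1) : A₄ γ (F₃ γ (A₃ γ γ)) = 0 := by
  rw [A₄, F₃, A₃, CharTwo.add_self_eq_zero, zero_div, inv_zero, zero_add, inv_one, add_comm 1 γ,
    mul_inv_cancel₀ (add_one_ne_zero_of_ne_one hγ), CharTwo.add_self_eq_zero]

end InvCycle

open InvCycle

theorem stmt_10 (n : ℕ) (γ : GaloisField 2 n) (h0 : γ ≠ 0) (h1 : γ ≠ 1) :
    ∀ x : GaloisField 2 n,
      (γ + 1) * ((((((x + γ) / (γ + 1))⁻¹ + 1)⁻¹ + γ)⁻¹ : GaloisField 2 n)) + 1 =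
        (cyc n γ x)⁻¹ := by
  intro x
  change A₄ γ (F₃ γ (A₃ γ x)) = (cyc n γ x)⁻¹
  unfold cyc
  split_ifs with hx0 hx1 hxγ
  · rw [hx0, A₄_F₃_A₃_zero h1 h0, inv_one]
  · rw [hx1, A₄_F₃_A₃_one h1 h0]
  · rw [hxγ, A₄_F₃_A₃_self h1, inv_zero]
  · exact A₄_F₃_A₃_of_ne h1 hx0 hx1 hxγ
end

section
/- Let F = Inv ∘ (0,1,γ) on GF(2^n) with n ≥ 4, γ ∉ {0,1}, c ∉ {0,1}, and let a ≠ 0, b ∈ GF(2^n). Set P_a = {0, 1, γ, a, a+1, a+γ}. Then the equation F(x+a) + c·F(x) = b has at most two solutions x in GF(2^n) \ P_a. -/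
open scoped Classical

theorem stmt_12 (n : ℕ) (hn : 4 ≤ n) (γ c : GaloisField 2 n)
    (hγ0 : γ ≠ 0) (hγ1 : γ ≠ 1) (hc0 : c ≠ 0) (hc1 : c ≠ 1)
    (a b : GaloisField 2 n) (ha : a ≠ 0)
    (F : GaloisField 2 n → GaloisField 2 n) (hF : F = fun x => (cyc n γ x)⁻¹) :
    Nat.card {x : GaloisField 2 n //
        x ∉ ({0, 1, γ, a, a + 1, a + γ} : Set (GaloisField 2 n)) ∧
        F (x + a) + c * F x = b} ≤ 2 := by
  have h2 : (2 : GaloisField 2 n) = 0 := by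
    have := CharP.cast_eq_zero (GaloisField 2 n) 2
    exact_mod_cast this
  have hc1' : c + 1 ≠ 0 := by
    intro h
    apply hc1
    linear_combination h - h2
  set p : Polynomial (GaloisField 2 n) := Polynomial.C b * Polynomial.X ^ 2 +
      Polynomial.C (a * b + c + 1) * Polynomial.X + Polynomial.C (a * c) with hp
  have hp0 : p ≠ 0 := by
    intro h
    rcases eq_or_ne b 0 with hb | hb
    · have := congrArg (fun q => Polynomial.coeff q 1) h
      simp [hp, Polynomial.coeff_add, Polynomial.coeff_C_mul, Polynomial.coeff_X_pow,
        Polynomial.coeff_X, Polynomial.coeff_C, hb] at this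
      exact hc1' (by linear_combination this)
    · have := congrArg (fun q => Polynomial.coeff q 2) h
      simp [hp, Polynomial.coeff_add, Polynomial.coeff_C_mul, Polynomial.coeff_X_pow,
        Polynomial.coeff_X, Polynomial.coeff_C, Polynomial.coeff_one] at this
      exact hb this
  have hdeg : p.natDegree ≤ 2 := by
    rw [hp]; compute_degree
  have key : ∀ x : GaloisField 2 n,
      (x ∉ ({0, 1, γ, a, a + 1, a + γ} : Set (GaloisField 2 n)) ∧
      F (x + a) + c * F x = b) → p.IsRoot x := by
    rintro x ⟨hx, heq⟩
    simp only [Set.mem_insert_iff, Set.mem_singleton_iff, not_or] at hx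
    obtain ⟨hx0, hx1, hxγ, hxa, hxa1, hxaγ⟩ := hx
    have hxa0 : x + a ≠ 0 := fun h => hxa (by linear_combination h - a * h2)
    have hxa1' : x + a ≠ 1 := fun h => hxa1 (by linear_combination h - a * h2)
    have hxaγ' : x + a ≠ γ := fun h => hxaγ (by linear_combination h - a * h2)
    rw [hF] at heq
    simp only [cyc, if_neg hx0, if_neg hx1, if_neg hxγ, if_neg hxa0, if_neg hxa1',
      if_neg hxaγ'] at heq
    have heq' : (x + a)⁻¹ + c * x⁻¹ = b := heq
    field_simp at heq'
    simp only [Polynomial.IsRoot, hp, Polynomial.eval_add, Polynomial.eval_mul,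
      Polynomial.eval_C, Polynomial.eval_pow, Polynomial.eval_X]
    linear_combination heq' + (b*x*a + b*x^2) * h2
  have hsub : {x : GaloisField 2 n |
      x ∉ ({0, 1, γ, a, a + 1, a + γ} : Set (GaloisField 2 n)) ∧
      F (x + a) + c * F x = b} ⊆ ↑p.roots.toFinset := by
    intro x hx
    simp only [Multiset.mem_toFinset, Finset.coe_sort_coe, Finset.mem_coe]
    rw [Polynomial.mem_roots hp0]
    exact key x hx
  have hle := Set.ncard_le_ncard hsub (Set.finite_coe_iff.mp (by infer_instance))
  calc Nat.card {x : GaloisField 2 n //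
        x ∉ ({0, 1, γ, a, a + 1, a + γ} : Set (GaloisField 2 n)) ∧
        F (x + a) + c * F x = b}
      = Set.ncard {x : GaloisField 2 n |
        x ∉ ({0, 1, γ, a, a + 1, a + γ} : Set (GaloisField 2 n)) ∧
        F (x + a) + c * F x = b} := rfl
    _ ≤ Set.ncard (↑p.roots.toFinset : Set (GaloisField 2 n)) := hle
    _ = p.roots.toFinset.card := by rw [Set.ncard_coe_finset]
    _ ≤ Multiset.card p.roots := p.roots.toFinset_card_le
    _ ≤ p.natDegree := Polynomial.card_roots' p
    _ ≤ 2 := hdeg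
end

section
/- Let F = Inv ∘ (0,1,γ) on GF(2^n) with n ≥ 4, γ ∉ {0,1}, c ∉ {0,1}. Let a ≠ 0 and b ∈ GF(2^n). The equation F(x+a) + c·F(x) = b has exactly two solutions in GF(2^n) \ P_a (where P_a = {0,1,γ,a,a+1,a+γ}) if and only if all of the following hold: b ≠ 0, ab + c + 1 ≠ 0, Tr(abc/(ab+c+1)²) = 0, (b+c)a + b + c + 1 ≠ 0, (b+1)a + b + c + 1 ≠ 0, (bγ+c)a + γ(bγ+c+1) ≠ 0, and (bγ+1)a + γ(bγ+c+1) ≠ 0. -/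
/-!
Off `P_a`, the 3-cycle fixes both `x` and `x + a`, so clearing denominators turns the equation
into the quadratic `Q x = b x² + (ab + c + 1) x + ac = 0`. In characteristic 2 with `b`,
`ab + c + 1` nonzero, the substitution `y = b x / (ab + c + 1)` reduces `Q` to the
Artin–Schreier equation `y² + y = abc / (ab + c + 1)²`, which is solvable iff the trace
vanishes, and then has two roots. When `b` or `ab + c + 1` vanishes (and `ac ≠ 0`), `Q` has at
most one root. So there are exactly two solutions iff these conditions hold and `Q` does not
vanish on `P_a`; on `0` and `a` it never does, leaving the four remaining conditions.
-/

open scoped Classical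

section ArtinSchreier

variable {K : Type*} [Field K] [Finite K] [Algebra (ZMod 2) K]

theorem trace_sq (x : K) : Algebra.trace (ZMod 2) K (x ^ 2) = Algebra.trace (ZMod 2) K x := by
  have := Fintype.ofFinite K
  have h := Algebra.trace_eq_of_algEquiv (FiniteField.frobeniusAlgEquivOfAlgebraic (ZMod 2) K) x
  rwa [FiniteField.coe_frobeniusAlgEquivOfAlgebraic, ZMod.card] at h

theorem trace_eq_zero_iff_exists_sq_add_self (d : K) :
    Algebra.trace (ZMod 2) K d = 0 ↔ ∃ y : K, y ^ 2 + y = d := by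
  have : CharP K 2 := charP_of_injective_algebraMap' (ZMod 2) 2
  let φ : K →+ K :=
    { toFun y := y ^ 2 + y
      map_zero' := by simp
      map_add' x y := by rw [CharTwo.add_sq]; ring }
  let T : K →+ ZMod 2 := (Algebra.trace (ZMod 2) K).toAddMonoidHom
  have hle : φ.range ≤ T.ker := by
    rintro _ ⟨y, rfl⟩
    simp [φ, T, trace_sq, CharTwo.add_self_eq_zero]
  have hker : Nat.card φ.ker = 2 := by
    have : (φ.ker : Set K) = {0, 1} := by
      ext y
      simp [φ, sq, ← mul_add_one, add_eq_zero_iff_eq_neg, CharTwo.neg_eq]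
    rw [← SetLike.coe_sort_coe, this, Nat.card_coe_set_eq, Set.ncard_pair zero_ne_one]
  have hrange : Nat.card T.range = 2 := by
    rw [AddMonoidHom.range_eq_top.mpr (Algebra.trace_surjective _ _), AddSubgroup.card_top,
      Nat.card_zmod]
  -- `φ.range` and `T.ker` both have index 2, so the inclusion is an equality.
  have heq : φ.range = T.ker := by
    refine AddSubgroup.eq_of_le_of_card_ge hle ?_
    have hφ := φ.ker.card_mul_index
    have hT := T.ker.card_mul_index
    rw [AddSubgroup.index_ker, hker] at hφ
    rw [AddSubgroup.index_ker, hrange] at hT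
    omega
  exact (SetLike.ext_iff.mp heq d).symm

end ArtinSchreier

theorem Set.ncard_diff_eq_ncard_iff_disjoint {α : Type*} {s t : Set α} (hs : s.Finite) :
    (s \ t).ncard = s.ncard ↔ Disjoint s t := by
  rw [← sdiff_eq_left]
  exact ⟨fun h => Set.eq_of_subset_of_ncard_le Set.sdiff_subset h.ge hs, fun h => by rw [h]⟩

section Quadratic

variable {K : Type*} [Field K]

theorem eq_or_mul_add_eq_of_quadratic [CharP K 2] {b B C x y : K}
    (hx : b * x ^ 2 + B * x + C = 0) (hy : b * y ^ 2 + B * y + C = 0) :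
    x = y ∨ b * (x + y) = B := by
  have h : (x + y) * (b * (x + y) + B) = 0 := by
    linear_combination hx - hy + (b * x * y + b * y ^ 2 + B * y) * CharTwo.two_eq_zero (R := K)
  rcases mul_eq_zero.mp h with h | h
  · exact Or.inl (CharTwo.add_eq_zero.mp h)
  · exact Or.inr (CharTwo.add_eq_zero.mp h)

theorem subsingleton_quadratic_roots [CharP K 2] {b B C : K} (hC : C ≠ 0) (h : b = 0 ∨ B = 0) :
    {x : K | b * x ^ 2 + B * x + C = 0}.Subsingleton := by
  intro x hx y hy
  rcases eq_or_mul_add_eq_of_quadratic hx hy with hxy | hxy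
  · exact hxy
  by_cases hb : b = 0
  · subst hb
    exact absurd (by simpa [← hxy] using hx) hC
  · have hxy0 := (mul_eq_zero.mp (hxy.trans (h.resolve_left hb))).resolve_left hb
    exact CharTwo.add_eq_zero.mp hxy0

theorem quadratic_roots_eq_pair [CharP K 2] {b B C r : K} (hb : b ≠ 0)
    (hr : b * r ^ 2 + B * r + C = 0) :
    {x : K | b * x ^ 2 + B * x + C = 0} = {r, r + B / b} := by
  ext x
  constructor
  · intro hx
    refine (eq_or_mul_add_eq_of_quadratic hx hr).imp id fun h => ?_
    rw [Set.mem_singleton_iff, ← h, mul_div_cancel_left₀ _ hb, add_comm x r,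
      CharTwo.add_cancel_left]
  · rintro (rfl | rfl)
    · exact hr
    · have hu : b * (B / b) = B := mul_div_cancel₀ B hb
      show b * (r + B / b) ^ 2 + B * (r + B / b) + C = 0
      linear_combination hr + (r * B + B * (B / b)) * CharTwo.two_eq_zero (R := K)
        + (2 * r + B / b) * hu

theorem exists_quadratic_root_iff_trace [Finite K] [Algebra (ZMod 2) K] {b B C : K}
    (hb : b ≠ 0) (hB : B ≠ 0) :
    (∃ x, b * x ^ 2 + B * x + C = 0) ↔ Algebra.trace (ZMod 2) K (b * C / B ^ 2) = 0 := by
  have : CharP K 2 := charP_of_injective_algebraMap' (ZMod 2) 2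
  have hsubst : ∀ x, (b * x / B) ^ 2 + b * x / B + b * C / B ^ 2 =
      b / B ^ 2 * (b * x ^ 2 + B * x + C) := fun x => by field_simp
  rw [trace_eq_zero_iff_exists_sq_add_self]
  constructor
  · rintro ⟨x, hx⟩
    exact ⟨b * x / B, CharTwo.add_eq_zero.mp (by rw [hsubst, hx, mul_zero])⟩
  · rintro ⟨y, hy⟩
    refine ⟨B * y / b, ?_⟩
    have h := hsubst (B * y / b)
    rw [show b * (B * y / b) / B = y by field_simp, CharTwo.add_eq_zero.mpr hy] at h
    exact (mul_eq_zero.mp h.symm).resolve_left (by positivity)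

theorem ncard_quadratic_roots_diff_eq_two_iff [Finite K] [Algebra (ZMod 2) K] {b B C : K}
    (hC : C ≠ 0) (P : Set K) :
    ({x | b * x ^ 2 + B * x + C = 0} \ P).ncard = 2 ↔
      b ≠ 0 ∧ B ≠ 0 ∧ Algebra.trace (ZMod 2) K (b * C / B ^ 2) = 0 ∧
        ∀ p ∈ P, b * p ^ 2 + B * p + C ≠ 0 := by
  have : CharP K 2 := charP_of_injective_algebraMap' (ZMod 2) 2
  by_cases hbB : b = 0 ∨ B = 0
  · refine iff_of_false (fun h => ?_) (by tauto)
    have := (Set.ncard_le_one_iff_subsingleton (s := {x | b * x ^ 2 + B * x + C = 0} \ P)).mpr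
      ((subsingleton_quadratic_roots hC hbB).anti Set.sdiff_subset)
    omega
  obtain ⟨hb, hB⟩ := not_or.mp hbB
  by_cases htr : Algebra.trace (ZMod 2) K (b * C / B ^ 2) = 0
  · obtain ⟨r, hr⟩ := (exists_quadratic_root_iff_trace hb hB).mpr htr
    have hcard : ({x | b * x ^ 2 + B * x + C = 0} : Set K).ncard = 2 := by
      rw [quadratic_roots_eq_pair hb hr, Set.ncard_pair]
      simpa using div_ne_zero hB hb
    have h := Set.ncard_diff_eq_ncard_iff_disjoint (t := P)
      (Set.toFinite {x | b * x ^ 2 + B * x + C = 0})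
    rw [hcard, Set.disjoint_right] at h
    rw [h]
    exact ⟨fun h => ⟨hb, hB, htr, h⟩, fun h => h.2.2.2⟩
  · refine iff_of_false (fun h => ?_) (fun h => htr h.2.2.1)
    obtain ⟨x, hx, -⟩ := Set.nonempty_of_ncard_ne_zero (s := _ \ P) (h ▸ two_ne_zero)
    exact htr ((exists_quadratic_root_iff_trace hb hB).mp ⟨x, hx⟩)

theorem inv_add_mul_inv_eq_iff [CharP K 2] {a b c x : K} (hx : x ≠ 0) (hxa : x + a ≠ 0) :
    (x + a)⁻¹ + c * x⁻¹ = b ↔ b * x ^ 2 + (a * b + c + 1) * x + a * c = 0 := by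
  rw [← CharTwo.add_eq_zero, show (x + a)⁻¹ + c * x⁻¹ + b =
      (b * x ^ 2 + (a * b + c + 1) * x + a * c) / (x * (x + a)) by field_simp; ring,
    div_eq_zero_iff, or_iff_left (mul_ne_zero hx hxa)]

theorem quadratic_ne_zero_on_exceptional_iff [CharP K 2] {a b c γ : K} (ha : a ≠ 0)
    (hc : c ≠ 0) :
    (∀ p ∈ ({0, 1, γ, a, a + 1, a + γ} : Set K), b * p ^ 2 + (a * b + c + 1) * p + a * c ≠ 0) ↔
      (b + c) * a + b + c + 1 ≠ 0 ∧ (b + 1) * a + b + c + 1 ≠ 0 ∧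
        (b * γ + c) * a + γ * (b * γ + c + 1) ≠ 0 ∧
        (b * γ + 1) * a + γ * (b * γ + c + 1) ≠ 0 := by
  have h2 : (2 : K) = 0 := CharTwo.two_eq_zero
  simp only [Set.mem_insert_iff, Set.mem_singleton_iff, forall_eq_or_imp, forall_eq]
  rw [show b * 0 ^ 2 + (a * b + c + 1) * 0 + a * c = a * c by ring,
    show b * 1 ^ 2 + (a * b + c + 1) * 1 + a * c = (b + c) * a + b + c + 1 by ring,
    show b * γ ^ 2 + (a * b + c + 1) * γ + a * c = (b * γ + c) * a + γ * (b * γ + c + 1) by ring,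
    show b * a ^ 2 + (a * b + c + 1) * a + a * c = a by
      linear_combination (a ^ 2 * b + a * c) * h2,
    show b * (a + 1) ^ 2 + (a * b + c + 1) * (a + 1) + a * c = (b + 1) * a + b + c + 1 by
      linear_combination (a ^ 2 * b + a * b + a * c) * h2,
    show b * (a + γ) ^ 2 + (a * b + c + 1) * (a + γ) + a * c =
        (b * γ + 1) * a + γ * (b * γ + c + 1) by
      linear_combination (a ^ 2 * b + a * b * γ + a * c) * h2]
  have hac : a * c ≠ 0 := mul_ne_zero ha hc
  tauto

end Quadratic

theorem cyc_of_ne {n : ℕ} {γ x : GaloisField 2 n} (h0 : x ≠ 0) (h1 : x ≠ 1) (hγ : x ≠ γ) :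
    cyc n γ x = x := by
  simp [cyc, h0, h1, hγ]

theorem inv_cyc_add_mul_inv_cyc_eq_iff {n : ℕ} {γ a b c x : GaloisField 2 n}
    (hx : x ∉ ({0, 1, γ, a, a + 1, a + γ} : Set (GaloisField 2 n))) :
    (cyc n γ (x + a))⁻¹ + c * (cyc n γ x)⁻¹ = b ↔
      b * x ^ 2 + (a * b + c + 1) * x + a * c = 0 := by
  simp only [Set.mem_insert_iff, Set.mem_singleton_iff, not_or] at hx
  obtain ⟨h0, h1, hγ, hxa0, hxa1, hxaγ⟩ := hx
  have ha0 : x + a ≠ 0 := fun h => hxa0 (CharTwo.add_eq_zero.mp h)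
  have ha1 : x + a ≠ 1 := fun h => hxa1 (by rw [CharTwo.add_eq_iff_eq_add.mp h, add_comm])
  have haγ : x + a ≠ γ := fun h => hxaγ (by rw [CharTwo.add_eq_iff_eq_add.mp h, add_comm])
  rw [cyc_of_ne h0 h1 hγ, cyc_of_ne ha0 ha1 haγ, inv_add_mul_inv_eq_iff h0 ha0]

theorem stmt_13_general (n : ℕ) (γ c : GaloisField 2 n)
    (hc0 : c ≠ 0)
    (a b : GaloisField 2 n) (ha : a ≠ 0)
    (F : GaloisField 2 n → GaloisField 2 n) (hF : F = fun x => (cyc n γ x)⁻¹) :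
    Nat.card {x : GaloisField 2 n //
        x ∉ ({0, 1, γ, a, a + 1, a + γ} : Set (GaloisField 2 n)) ∧
        F (x + a) + c * F x = b} = 2 ↔
      (b ≠ 0 ∧ a * b + c + 1 ≠ 0 ∧
        Algebra.trace (ZMod 2) (GaloisField 2 n)
          (a * b * c / (a * b + c + 1) ^ 2) = 0 ∧
        (b + c) * a + b + c + 1 ≠ 0 ∧
        (b + 1) * a + b + c + 1 ≠ 0 ∧
        (b * γ + c) * a + γ * (b * γ + c + 1) ≠ 0 ∧
        (b * γ + 1) * a + γ * (b * γ + c + 1) ≠ 0) := by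
  subst hF
  set P : Set (GaloisField 2 n) := {0, 1, γ, a, a + 1, a + γ}
  have hcard : Nat.card {x // x ∉ P ∧ (cyc n γ (x + a))⁻¹ + c * (cyc n γ x)⁻¹ = b} =
      ({x | b * x ^ 2 + (a * b + c + 1) * x + a * c = 0} \ P).ncard := by
    rw [← Nat.card_coe_set_eq]
    exact Nat.card_congr (Equiv.subtypeEquivRight fun _ =>
      (and_congr_right inv_cyc_add_mul_inv_cyc_eq_iff).trans and_comm)
  rw [hcard, ncard_quadratic_roots_diff_eq_two_iff (mul_ne_zero ha hc0),
    quadratic_ne_zero_on_exceptional_iff ha hc0, show b * (a * c) = a * b * c by ring]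

theorem stmt_13 (n : ℕ) (hn : 4 ≤ n) (γ c : GaloisField 2 n)
    (hγ0 : γ ≠ 0) (hγ1 : γ ≠ 1) (hc0 : c ≠ 0) (hc1 : c ≠ 1)
    (a b : GaloisField 2 n) (ha : a ≠ 0)
    (F : GaloisField 2 n → GaloisField 2 n) (hF : F = fun x => (cyc n γ x)⁻¹) :
    Nat.card {x : GaloisField 2 n //
        x ∉ ({0, 1, γ, a, a + 1, a + γ} : Set (GaloisField 2 n)) ∧
        F (x + a) + c * F x = b} = 2 ↔
      (b ≠ 0 ∧ a * b + c + 1 ≠ 0 ∧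
        Algebra.trace (ZMod 2) (GaloisField 2 n)
          (a * b * c / (a * b + c + 1) ^ 2) = 0 ∧
        (b + c) * a + b + c + 1 ≠ 0 ∧
        (b + 1) * a + b + c + 1 ≠ 0 ∧
        (b * γ + c) * a + γ * (b * γ + c + 1) ≠ 0 ∧
        (b * γ + 1) * a + γ * (b * γ + c + 1) ≠ 0) :=
  stmt_13_general n γ c hc0 a b ha F hF
end

section
/- Let F = Inv ∘ (0,1,γ) on GF(2^n) with n ≥ 4, γ ∉ {0,1}, c ∉ {0,1}. Then the c-differential uniformity of F satisfies 3 ≤ _cΔ_F ≤ 5. -/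
open scoped Classical

/-!
For `a ≠ 0` a solution set of `F (x + a) + c F x = b` never contains both `x` and `x + a`:
otherwise `(1 + c) (F (x + a) + F x) = 0`, and `F` is injective. So it meets `P ∪ (P + a)`,
`P = {0, 1, γ}`, in at most three points; off that set `F` is the inversion and the equation
becomes the quadratic `b x² + (a b + c + 1) x + c a = 0`, nonzero as `c a ≠ 0`, with at most two
roots. For `a = 0` there is at most one solution.

For the lower bound put `q = t² + c t + c`, `a = γ + γ t / q`, `b = q / (γ t)`: then `γ`,
`γ c (t + 1) / q` and `γ t (t + c) / q` are three solutions as soon as `t` avoids the roots of a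
polynomial of degree 19, which is possible once `2 ^ n > 19`. In `GF(16)` this can fail, and there
the claim is checked by exhaustive search in an explicit model of the field.
-/

open Polynomial

section CDiff

variable {K : Type*} [Field K]

def cDiffSolutions (f : K → K) (c a b : K) : Set K :=
  {x | f (x + a) + c * f x = b}

@[simp] lemma mem_cDiffSolutions {f : K → K} {c a b x : K} :
    x ∈ cDiffSolutions f c a b ↔ f (x + a) + c * f x = b := Iff.rfl

variable [CharP K 2] {f : K → K} {c : K}

lemma one_add_ne_zero_of_ne_one (hc1 : c ≠ 1) : 1 + c ≠ 0 := by
  rwa [Ne, CharTwo.add_eq_zero, eq_comm]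

lemma ncard_cDiffSolutions_zero_le_one [Finite K] (hf : f.Injective) (hc1 : c ≠ 1) (b : K) :
    (cDiffSolutions f c 0 b).ncard ≤ 1 := by
  refine (Set.ncard_le_one).2 fun x hx y hy =>
    hf (mul_left_cancel₀ (one_add_ne_zero_of_ne_one hc1) ?_)
  simp only [mem_cDiffSolutions, add_zero] at hx hy
  linear_combination hx - hy

lemma eq_zero_of_mem_cDiffSolutions_of_add_mem (hf : f.Injective) (hc1 : c ≠ 1) {a b x : K}
    (hx : x ∈ cDiffSolutions f c a b) (hxa : x + a ∈ cDiffSolutions f c a b) : a = 0 := by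
  simp only [mem_cDiffSolutions, CharTwo.add_cancel_right] at hx hxa
  have : f (x + a) = f x := by
    refine mul_left_cancel₀ (one_add_ne_zero_of_ne_one hc1) ?_
    linear_combination (norm := (ring_nf; reduce_mod_char!)) hx - hxa
  exact add_eq_left.mp (hf this)

lemma ncard_cDiffSolutions_inter_le [Finite K] (hf : f.Injective) (hc1 : c ≠ 1) {a : K} (ha : a ≠ 0)
    (b : K) (P : Set K) :
    (cDiffSolutions f c a b ∩ {x | x ∈ P ∨ x + a ∈ P}).ncard ≤ P.ncard := by
  refine Set.ncard_le_ncard_of_injOn (fun x => if x ∈ P then x else x + a) ?_ ?_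
  · rintro x ⟨-, hx | hx⟩ <;> split_ifs <;> assumption
  · rintro x ⟨hxS, -⟩ y ⟨hyS, -⟩ hxy
    dsimp only at hxy
    split_ifs at hxy
    · exact hxy
    · exact (ha (eq_zero_of_mem_cDiffSolutions_of_add_mem hf hc1 hyS (hxy ▸ hxS))).elim
    · exact (ha (eq_zero_of_mem_cDiffSolutions_of_add_mem hf hc1 hxS (hxy ▸ hyS))).elim
    · exact add_right_cancel hxy

end CDiff

section InvCycle

variable {K : Type*} [Field K] [DecidableEq K]

noncomputable def invCycle (γ x : K) : K :=
  (if x = 0 then 1 else if x = 1 then γ else if x = γ then 0 else x)⁻¹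

variable {γ : K}

lemma invCycle_self (hγ0 : γ ≠ 0) (hγ1 : γ ≠ 1) : invCycle γ γ = 0 := by
  simp [invCycle, hγ0, hγ1]

lemma invCycle_of_notMem {x : K} (hx : x ∉ ({0, 1, γ} : Set K)) : invCycle γ x = x⁻¹ := by
  simp only [Set.mem_insert_iff, Set.mem_singleton_iff, not_or] at hx
  simp [invCycle, hx.1, hx.2.1, hx.2.2]

lemma invCycle_injective (hγ0 : γ ≠ 0) (hγ1 : γ ≠ 1) : Function.Injective (invCycle γ) := by
  intro x y h
  replace h := inv_injective h
  split_ifs at h <;> simp_all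

lemma map_invCycle {L : Type*} [Field L] [DecidableEq L] (e : K ≃+* L) (x : K) :
    e (invCycle γ x) = invCycle (e γ) (e x) := by
  simp only [invCycle, map_inv₀, apply_ite e, map_zero, map_one, RingEquiv.map_eq_zero_iff,
    RingEquiv.map_eq_one_iff, EmbeddingLike.apply_eq_iff_eq]

lemma ncard_cDiffSolutions_invCycle_map {L : Type*} [Field L] [DecidableEq L] (e : K ≃+* L)
    (c a b : K) :
    (cDiffSolutions (invCycle (e γ)) (e c) (e a) (e b)).ncard =
      (cDiffSolutions (invCycle γ) c a b).ncard := by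
  rw [← Set.ncard_image_of_injective _ e.injective]
  congr 1
  ext y
  obtain ⟨x, rfl⟩ := e.surjective y
  rw [e.injective.mem_set_image, mem_cDiffSolutions, mem_cDiffSolutions, ← map_add,
    ← map_invCycle, ← map_invCycle, ← map_mul, ← map_add, e.injective.eq_iff]

lemma mem_cDiffSolutions_invCycle_iff {c a b x : K} (hxP : x ∉ ({0, 1, γ} : Set K))
    (hxaP : x + a ∉ ({0, 1, γ} : Set K)) :
    x ∈ cDiffSolutions (invCycle γ) c a b ↔ (x + a)⁻¹ + c * x⁻¹ = b := by
  rw [mem_cDiffSolutions, invCycle_of_notMem hxP, invCycle_of_notMem hxaP]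

variable [CharP K 2] {c : K}

lemma quadratic_eq_zero_of_mem_cDiffSolutions_invCycle {a b x : K}
    (hx : x ∈ cDiffSolutions (invCycle γ) c a b) (hxP : x ∉ ({0, 1, γ} : Set K))
    (hxaP : x + a ∉ ({0, 1, γ} : Set K)) :
    b * x ^ 2 + (a * b + c + 1) * x + c * a = 0 := by
  have hx0 : x ≠ 0 := fun h => hxP (by simp [h])
  have hxa0 : x + a ≠ 0 := fun h => hxaP (by simp [h])
  rw [mem_cDiffSolutions_invCycle_iff hxP hxaP] at hx
  field_simp at hx
  linear_combination (norm := (ring_nf; reduce_mod_char!)) hx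

theorem ncard_cDiffSolutions_invCycle_le_five [Finite K] (hγ0 : γ ≠ 0) (hγ1 : γ ≠ 1)
    (hc0 : c ≠ 0) (hc1 : c ≠ 1) (a b : K) :
    (cDiffSolutions (invCycle γ) c a b).ncard ≤ 5 := by
  have hf := invCycle_injective hγ0 hγ1
  rcases eq_or_ne a 0 with rfl | ha
  · exact (ncard_cDiffSolutions_zero_le_one hf hc1 b).trans (by norm_num)
  set S := cDiffSolutions (invCycle γ) c a b
  set P : Set K := {0, 1, γ}
  set p : K[X] := C b * X ^ 2 + C (a * b + c + 1) * X + C (c * a)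
  have hp : p ≠ 0 := fun h => mul_ne_zero hc0 ha (by simpa [p] using congrArg (eval 0) h)
  have hS : S ⊆ (S ∩ {x | x ∈ P ∨ x + a ∈ P}) ∪ p.rootSet K := by
    intro x hx
    by_cases hxP : x ∈ P ∨ x + a ∈ P
    · exact Or.inl ⟨hx, hxP⟩
    · push Not at hxP
      refine Or.inr (mem_rootSet.2 ⟨hp, ?_⟩)
      simpa [p] using quadratic_eq_zero_of_mem_cDiffSolutions_invCycle hx hxP.1 hxP.2
  have hP : P.ncard ≤ 3 :=
    (Set.ncard_insert_le _ _).trans (by grw [Set.ncard_insert_le, Set.ncard_singleton])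
  calc S.ncard ≤ (S ∩ {x | x ∈ P ∨ x + a ∈ P}).ncard + (p.rootSet K).ncard :=
        (Set.ncard_le_ncard hS).trans (Set.ncard_union_le _ _)
    _ ≤ 3 + 2 := add_le_add ((ncard_cDiffSolutions_inter_le hf hc1 ha b P).trans hP)
        ((ncard_rootSet_le p K).trans natDegree_quadratic_le)

end InvCycle

section Admissible

variable {K : Type*} [Field K] [CharP K 2]

/-- Each factor, evaluated at `t`, rules out one coincidence in the construction of
`exists_two_lt_ncard_cDiffSolutions_invCycle_of_eval_ne_zero`: a point or its shift by `a`
landing in `{0, 1, γ}`, `q = 0`, or two of the three solutions being equal. -/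
noncomputable def admissiblePoly (γ c : K) : K[X] :=
  X * (X + 1) * (X + C c) * (X + C (c + 1)) * (C (1 + c) * X + C c) * (X ^ 2 + C c) *
    (X ^ 2 + C c * X + C c) * (X ^ 2 + C (c + γ) * X + C c) *
    (X ^ 2 + C (c + γ * c) * X + C (c + γ * c)) * (C (1 + γ) * X ^ 2 + C (c + γ) * X + C c) *
    (C (1 + γ) * X ^ 2 + C (c + γ * c) * X + C c) * (X ^ 2 + C (c + γ) * X + C (c + γ * c))

variable {γ c : K}

lemma div_notMem_of_add_ne_zero {q N : K} (hq : q ≠ 0) (h0 : N ≠ 0) (h1 : N + q ≠ 0)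
    (hγ : N + γ * q ≠ 0) : N / q ∉ ({0, 1, γ} : Set K) := by
  simp only [Set.mem_insert_iff, Set.mem_singleton_iff, div_eq_iff hq, zero_mul, one_mul, not_or]
  exact ⟨h0, fun h => h1 (by rw [h, CharTwo.add_self_eq_zero]),
    fun h => hγ (by rw [h, CharTwo.add_self_eq_zero])⟩

lemma natDegree_admissiblePoly (hγ1 : γ ≠ 1) (hc1 : c ≠ 1) :
    (admissiblePoly γ c).natDegree = 19 := by
  have := one_add_ne_zero_of_ne_one hc1
  have := one_add_ne_zero_of_ne_one hγ1
  unfold admissiblePoly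
  compute_degree!

lemma exists_eval_admissiblePoly_ne_zero [Fintype K] (hγ1 : γ ≠ 1) (hc1 : c ≠ 1)
    (hK : 19 < Fintype.card K) : ∃ t, (admissiblePoly γ c).eval t ≠ 0 := by
  have hdeg := natDegree_admissiblePoly hγ1 hc1
  refine exists_eval_ne_zero_of_natDegree_lt_card _
    (ne_zero_of_natDegree_gt (n := 0) (by omega)) ?_
  rw [hdeg, Cardinal.mk_fintype]
  exact_mod_cast hK

variable [DecidableEq K]

theorem exists_two_lt_ncard_cDiffSolutions_invCycle_of_eval_ne_zero [Finite K] (hγ0 : γ ≠ 0)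
    (hγ1 : γ ≠ 1) (hc0 : c ≠ 0) {t : K} (ht : (admissiblePoly γ c).eval t ≠ 0) :
    ∃ a b, 2 < (cDiffSolutions (invCycle γ) c a b).ncard := by
  simp only [admissiblePoly, eval_mul, eval_add, eval_pow, eval_X, eval_C, eval_one,
    mul_ne_zero_iff] at ht
  obtain ⟨⟨⟨⟨⟨⟨⟨⟨⟨⟨⟨ht0, ht1⟩, htc⟩, hr'aγ⟩, hraγ⟩, hrr'⟩, hq⟩, hγa1⟩, hr1⟩, hra1⟩, hr'1⟩, hr'a1⟩ :=
    ht
  set q := t ^ 2 + c * t + c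
  set a := γ + γ * t / q
  have hγa : γ + a = γ * t / q := by rw [← add_assoc, CharTwo.add_self_eq_zero, zero_add]
  have hra : γ * c * (t + 1) / q + a = γ * t * (t + 1) / q := by
    simp only [a]; field_simp; simp only [q]; ring_nf; reduce_mod_char!
  have hr'a : γ * t * (t + c) / q + a = γ * (t + c) / q := by
    simp only [a]; field_simp; simp only [q]; ring_nf; reduce_mod_char!
  have hγP : γ * t / q ∉ ({0, 1, γ} : Set K) :=
    div_notMem_of_add_ne_zero hq (mul_ne_zero hγ0 ht0) (ne_of_eq_of_ne (by ring) hγa1)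
      (ne_of_eq_of_ne (by ring) (mul_ne_zero (mul_ne_zero hγ0 ht1) htc))
  have hrP : γ * c * (t + 1) / q ∉ ({0, 1, γ} : Set K) :=
    div_notMem_of_add_ne_zero hq (mul_ne_zero (mul_ne_zero hγ0 hc0) ht1)
      (ne_of_eq_of_ne (by ring) hr1)
      (ne_of_eq_of_ne (by simp only [q]; ring_nf; reduce_mod_char!)
        (mul_ne_zero hγ0 (pow_ne_zero 2 ht0)))
  have hr'P : γ * t * (t + c) / q ∉ ({0, 1, γ} : Set K) :=
    div_notMem_of_add_ne_zero hq (mul_ne_zero (mul_ne_zero hγ0 ht0) htc)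
      (ne_of_eq_of_ne (by ring) hr'1)
      (ne_of_eq_of_ne (by simp only [q]; ring_nf; reduce_mod_char!) (mul_ne_zero hγ0 hc0))
  have hraP : γ * t * (t + 1) / q ∉ ({0, 1, γ} : Set K) :=
    div_notMem_of_add_ne_zero hq (mul_ne_zero (mul_ne_zero hγ0 ht0) ht1)
      (ne_of_eq_of_ne (by ring) hra1)
      (ne_of_eq_of_ne (by simp only [q]; ring_nf; reduce_mod_char!) (mul_ne_zero hγ0 hraγ))
  have hr'aP : γ * (t + c) / q ∉ ({0, 1, γ} : Set K) :=
    div_notMem_of_add_ne_zero hq (mul_ne_zero hγ0 htc)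
      (ne_of_eq_of_ne (by ring) hr'a1)
      (ne_of_eq_of_ne (by simp only [q]; ring_nf; reduce_mod_char!)
        (mul_ne_zero (mul_ne_zero hγ0 ht0) hr'aγ))
  refine ⟨a, q / (γ * t), (Set.two_lt_ncard_iff (Set.toFinite _)).2
    ⟨γ, γ * c * (t + 1) / q, γ * t * (t + c) / q, ?_, ?_, ?_, ?_, ?_, ?_⟩⟩
  · rw [mem_cDiffSolutions, hγa, invCycle_self hγ0 hγ1, invCycle_of_notMem hγP, mul_zero,
      add_zero, inv_div]
  · rw [mem_cDiffSolutions_invCycle_iff hrP (hra ▸ hraP), hra]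
    field_simp
    ring
  · rw [mem_cDiffSolutions_invCycle_iff hr'P (hr'a ▸ hr'aP), hr'a]
    field_simp
  · exact fun h => hrP (h ▸ by simp)
  · exact fun h => hr'P (h ▸ by simp)
  · rw [Ne, div_left_inj' hq]
    intro h
    refine hrr' (mul_left_cancel₀ hγ0 ?_)
    linear_combination (norm := (ring_nf; reduce_mod_char!)) h

end Admissible

/-- `GF(16) = 𝔽₂[X] / (X⁴ + X + 1)`, an element encoded by the bits of its coefficient vector,
so that addition is `xor`. -/
def GF16 : Type := Fin 16

namespace GF16

instance : DecidableEq GF16 := inferInstanceAs (DecidableEq (Fin 16))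
instance : Fintype GF16 := inferInstanceAs (Fintype (Fin 16))

def ofNat (n : ℕ) : GF16 := Fin.ofNat 16 n

def toNat (x : GF16) : ℕ := Fin.val (n := 16) x

def mulX (a : ℕ) : ℕ := if a < 8 then 2 * a else 2 * a ^^^ 0b10011

def add (x y : GF16) : GF16 := ofNat (x.toNat ^^^ y.toNat)

def mul (x y : GF16) : GF16 :=
  ofNat ((if y.toNat.testBit 0 then x.toNat else 0) ^^^
    (if y.toNat.testBit 1 then mulX x.toNat else 0) ^^^
    (if y.toNat.testBit 2 then mulX (mulX x.toNat) else 0) ^^^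
    (if y.toNat.testBit 3 then mulX (mulX (mulX x.toNat)) else 0))

-- `x⁻¹ = x ^ 14`
def inv (x : GF16) : GF16 :=
  let x2 := mul x x
  let x4 := mul x2 x2
  mul x2 (mul x4 (mul x4 x4))

lemma add_assoc' : ∀ a b c : GF16, add (add a b) c = add a (add b c) := by decide
lemma zero_add' : ∀ a : GF16, add (ofNat 0) a = a := by decide
lemma add_zero' : ∀ a : GF16, add a (ofNat 0) = a := by decide
lemma add_comm' : ∀ a b : GF16, add a b = add b a := by decide
lemma add_self' : ∀ a : GF16, add a a = ofNat 0 := by decide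
lemma mul_assoc' : ∀ a b c : GF16, mul (mul a b) c = mul a (mul b c) := by decide +kernel
lemma one_mul' : ∀ a : GF16, mul (ofNat 1) a = a := by decide
lemma mul_one' : ∀ a : GF16, mul a (ofNat 1) = a := by decide
lemma mul_comm' : ∀ a b : GF16, mul a b = mul b a := by decide
lemma left_distrib' : ∀ a b c : GF16, mul a (add b c) = add (mul a b) (mul a c) := by
  decide +kernel
lemma zero_mul' : ∀ a : GF16, mul (ofNat 0) a = ofNat 0 := by decide
lemma mul_inv_cancel' : ∀ a : GF16, a ≠ ofNat 0 → mul a (inv a) = ofNat 1 := by decide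

instance : Zero GF16 := ⟨ofNat 0⟩
instance : One GF16 := ⟨ofNat 1⟩
instance : Add GF16 := ⟨add⟩
instance : Neg GF16 := ⟨id⟩
instance : Mul GF16 := ⟨mul⟩
instance : Inv GF16 := ⟨inv⟩

instance : CommRing GF16 where
  add_assoc := add_assoc'
  zero_add := zero_add'
  add_zero := add_zero'
  add_comm := add_comm'
  neg_add_cancel := add_self'
  mul_assoc := mul_assoc'
  one_mul := one_mul'
  mul_one := mul_one'
  mul_comm := mul_comm'
  left_distrib := left_distrib'
  right_distrib a b c := by
    change mul (add a b) c = add (mul a c) (mul b c)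
    rw [mul_comm', left_distrib', mul_comm' c, mul_comm' c]
  zero_mul := zero_mul'
  mul_zero a := by
    change mul a (ofNat 0) = ofNat 0
    rw [mul_comm', zero_mul']
  nsmul := nsmulRec
  zsmul := zsmulRec

instance : Field GF16 where
  exists_pair_ne := ⟨0, 1, by decide⟩
  mul_inv_cancel := mul_inv_cancel'
  inv_zero := by decide
  nnqsmul := _
  qsmul := _

-- Under `open scoped Classical` a search that hits the default size limit silently falls back to
-- `Classical.propDecidable`, which the kernel cannot evaluate.
set_option synthInstance.maxSize 2000 in
lemma exists_three_solutions : ∀ c γ : GF16, c ≠ 0 → c ≠ 1 → γ ≠ 0 → γ ≠ 1 →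
    ∃ a : GF16, a ≠ 0 ∧ ∃ x y : GF16, x ≠ y ∧
      invCycle γ (y + a) + c * invCycle γ y = invCycle γ (x + a) + c * invCycle γ x ∧
      ∃ z : GF16, z ≠ x ∧ z ≠ y ∧
        invCycle γ (z + a) + c * invCycle γ z = invCycle γ (x + a) + c * invCycle γ x := by
  decide +kernel

end GF16

section LowerBound

variable {K : Type*} [Field K] [Fintype K] [DecidableEq K] {γ c : K}

lemma exists_two_lt_ncard_cDiffSolutions_invCycle_of_card_eq_sixteen
    (hK : Fintype.card K = 16) (hγ0 : γ ≠ 0) (hγ1 : γ ≠ 1) (hc0 : c ≠ 0) (hc1 : c ≠ 1) :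
    ∃ a b, 2 < (cDiffSolutions (invCycle γ) c a b).ncard := by
  let e : GF16 ≃+* K := FiniteField.ringEquivOfCardEq (by rw [hK]; rfl)
  obtain ⟨γ, rfl⟩ := e.surjective γ
  obtain ⟨c, rfl⟩ := e.surjective c
  obtain ⟨a, -, x, y, hxy, hy, z, hzx, hzy, hz⟩ := GF16.exists_three_solutions c γ
    ((map_ne_zero e).1 hc0) ((map_ne_one_iff e e.injective).1 hc1)
    ((map_ne_zero e).1 hγ0) ((map_ne_one_iff e e.injective).1 hγ1)
  refine ⟨e a, e (invCycle γ (x + a) + c * invCycle γ x), ?_⟩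
  rw [ncard_cDiffSolutions_invCycle_map]
  exact (Set.two_lt_ncard_iff (Set.toFinite _)).2
    ⟨x, y, z, rfl, hy, hz, hxy, hzx.symm, hzy.symm⟩

theorem exists_two_lt_ncard_cDiffSolutions_invCycle [CharP K 2] {n : ℕ}
    (hK : Fintype.card K = 2 ^ n) (hn : 4 ≤ n) (hγ0 : γ ≠ 0) (hγ1 : γ ≠ 1) (hc0 : c ≠ 0)
    (hc1 : c ≠ 1) : ∃ a b, 2 < (cDiffSolutions (invCycle γ) c a b).ncard := by
  rcases hn.eq_or_lt with rfl | hn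
  · exact exists_two_lt_ncard_cDiffSolutions_invCycle_of_card_eq_sixteen hK hγ0 hγ1 hc0 hc1
  have hK19 : 19 < Fintype.card K :=
    hK ▸ (by norm_num : 19 < 2 ^ 5).trans_le (Nat.pow_le_pow_right two_pos hn)
  obtain ⟨t, ht⟩ := exists_eval_admissiblePoly_ne_zero hγ1 hc1 hK19
  exact exists_two_lt_ncard_cDiffSolutions_invCycle_of_eval_ne_zero hγ0 hγ1 hc0 ht

end LowerBound

theorem stmt_14 (n : ℕ) (hn : 4 ≤ n) (γ c : GaloisField 2 n)
    (hγ0 : γ ≠ 0) (hγ1 : γ ≠ 1) (hc0 : c ≠ 0) (hc1 : c ≠ 1)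
    (F : GaloisField 2 n → GaloisField 2 n) (hF : F = fun x => (cyc n γ x)⁻¹) :
    3 ≤ cdu n F c ∧ cdu n F c ≤ 5 := by
  let := Fintype.ofFinite (GaloisField 2 n)
  have hcount (a b) : cdCount n F c a b = (cDiffSolutions (invCycle γ) c a b).ncard := by
    rw [cdCount, hF]
    exact Nat.card_coe_set_eq _
  have hcard : Fintype.card (GaloisField 2 n) = 2 ^ n := by
    rw [← Nat.card_eq_fintype_card, GaloisField.card 2 n (by omega)]
  obtain ⟨a, b, hab⟩ := exists_two_lt_ncard_cDiffSolutions_invCycle hcard hn hγ0 hγ1 hc0 hc1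
  have hle : ∀ k ∈ {k | ∃ a b, (c = 1 → a ≠ 0) ∧ k = cdCount n F c a b}, k ≤ 5 := by
    rintro k ⟨a, b, -, rfl⟩
    exact hcount a b ▸ ncard_cDiffSolutions_invCycle_le_five hγ0 hγ1 hc0 hc1 a b
  have hmem : cdCount n F c a b ∈ {k | ∃ a b, (c = 1 → a ≠ 0) ∧ k = cdCount n F c a b} :=
    ⟨a, b, fun h => absurd h hc1, rfl⟩
  exact ⟨(hcount a b ▸ hab).trans_le (le_csSup ⟨5, hle⟩ hmem), csSup_le ⟨_, hmem⟩ hle⟩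
end

section
/- Let F = Inv ∘ (0,1,γ) on GF(2^n) with n ≥ 4, γ ∉ {0,1}, c ∉ {0,1}, γ ∉ GF(4), and suppose c = γ³/(γ+1)², Tr(1/(γ(γ+1)²)) = 0, γ⁴ + γ³ + 1 ≠ 0, and γ⁵ + γ² + 1 ≠ 0. Then the c-differential uniformity of F equals 5; specifically, with a = γ⁻¹ and b = γ/(γ²+1), the equation F(x+a) + c·F(x) = b has exactly 5 solutions. -/
open scoped Classical

/-!
Write `S` for the set of solutions of `F (x + a) + c F x = b`. As `F` is injective and `c ≠ 1`,
in characteristic `2` the points `x` and `x + a` are never both in `S` when `a ≠ 0`. Off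
`D = {0, 1, γ}` and its translate `D + a`, `F` is inversion and the equation becomes the quadratic
`b x² + (ab + c + 1) x + ac = 0`. So `S` has at most one point of each pair `{p, p + a}`, `p ∈ D`,
and at most two further points: `|S| ≤ 5`.

For `a = γ⁻¹`, `b = γ / (γ² + 1)`, `c = γ³ / (γ + 1)²` the points of `D` are solutions, and the
quadratic is a multiple of `x² + γ (γ + 1) x + γ`. Substituting `x = γ (γ + 1) y` turns it into
`y² + y = 1 / (γ (γ + 1)²)`, which is solvable because the trace of the right side vanishes
(additive Hilbert 90). The conditions on `γ` keep both roots outside `D ∪ (D + a)`.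
-/

open Function

section Field

variable {K : Type*} [Field K]

open Polynomial in
theorem ncard_setOf_quadratic_le_two {u v w : K} (hw : w ≠ 0) :
    {x : K | u * x ^ 2 + v * x + w = 0}.ncard ≤ 2 := by
  set P : K[X] := C u * X ^ 2 + C v * X + C w
  have hP : P ≠ 0 := fun h => hw (by simpa [P] using congrArg (coeff · 0) h)
  have hsub : {x : K | u * x ^ 2 + v * x + w = 0} ⊆ P.roots.toFinset := fun x hx => by
    simpa [P, hP] using hx
  calc _ ≤ (P.roots.toFinset : Set K).ncard := Set.ncard_le_ncard hsub (Finset.finite_toSet _)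
    _ = P.roots.toFinset.card := Set.ncard_coe_finset _
    _ ≤ P.roots.card := Multiset.toFinset_card_le _
    _ ≤ P.natDegree := card_roots' P
    _ ≤ 2 := natDegree_quadratic_le

def cdSolutions (F : K → K) (c a b : K) : Set K := {x | F (x + a) + c * F x = b}

@[simp]
theorem mem_cdSolutions {F : K → K} {c a b x : K} :
    x ∈ cdSolutions F c a b ↔ F (x + a) + c * F x = b := Iff.rfl

section CharTwo

variable [CharP K 2] {F : K → K} {a b c : K}

theorem sq_add_one_eq_add_one_sq (x : K) : x ^ 2 + 1 = (x + 1) ^ 2 := by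
  rw [CharTwo.add_sq, one_pow]

theorem sq_add_mul_add_eq_zero_iff {p q r x : K} (hr : r ^ 2 + p * r + q = 0) :
    x ^ 2 + p * x + q = 0 ↔ x = r ∨ x = r + p := by
  have : x ^ 2 + p * x + q = (x - r) * (x - (r + p)) := by
    linear_combination hr + (r * x + p * x - r ^ 2 - p * r) * CharTwo.two_eq_zero (R := K)
  rw [this, mul_eq_zero, sub_eq_zero, sub_eq_zero]

theorem inv_add_add_mul_inv_eq_iff {x : K} (hx : x ≠ 0) (hxa : x + a ≠ 0) :
    (x + a)⁻¹ + c * x⁻¹ = b ↔ b * x ^ 2 + (a * b + c + 1) * x + a * c = 0 := by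
  have key : (x + a)⁻¹ + c * x⁻¹ + b =
      (b * x ^ 2 + (a * b + c + 1) * x + a * c) / (x * (x + a)) := by
    field_simp
    grind
  rw [← CharTwo.add_eq_zero, key, div_eq_zero_iff, or_iff_left (mul_ne_zero hx hxa)]

theorem add_notMem_cdSolutions (hF : Injective F) (hc : c ≠ 1) (ha : a ≠ 0) {x : K}
    (hx : x ∈ cdSolutions F c a b) : x + a ∉ cdSolutions F c a b := by
  intro hxa
  simp only [mem_cdSolutions, add_assoc, CharTwo.add_self_eq_zero, add_zero] at hx hxa
  have : (1 - c) * (F (x + a) - F x) = 0 := by linear_combination hx - hxa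
  have hFx := (mul_eq_zero.1 this).resolve_left (sub_ne_zero.2 hc.symm)
  exact ha (add_eq_left.1 (hF (sub_eq_zero.1 hFx)))

theorem ncard_cdSolutions_zero_le_one [Finite K] (hF : Injective F) (hc : c ≠ 1) (b : K) :
    (cdSolutions F c 0 b).ncard ≤ 1 := by
  refine (Set.ncard_le_one_iff (Set.toFinite _)).2 fun {x y} hx hy => hF ?_
  simp only [mem_cdSolutions, add_zero] at hx hy
  have : (1 + c) * (F x - F y) = 0 := by linear_combination hx - hy
  exact sub_eq_zero.1 ((mul_eq_zero.1 this).resolve_left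
    fun h => hc (CharTwo.add_eq_zero.1 h).symm)

theorem ncard_cdSolutions_le [Finite K] (hF : Injective F) {D : Finset K} (hD0 : 0 ∈ D)
    (hD : ∀ x ∉ D, F x = x⁻¹) (hc0 : c ≠ 0) (hc1 : c ≠ 1) (a b : K) :
    (cdSolutions F c a b).ncard ≤ D.card + 2 := by
  rcases eq_or_ne a 0 with rfl | ha
  · exact (ncard_cdSolutions_zero_le_one hF hc1 b).trans (by omega)
  set S := cdSolutions F c a b
  -- `S` meets each pair `{p, p + a}` at most once, and `pick p` is the point where it can
  let pick : K → K := fun p => if p ∈ S then p else p + a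
  have hcover : S ⊆ ↑(D.image pick) ∪ {x | b * x ^ 2 + (a * b + c + 1) * x + a * c = 0} := by
    intro x hx
    by_cases hxD : x ∈ D
    · exact Or.inl (Finset.mem_image.2 ⟨x, hxD, if_pos hx⟩)
    by_cases hxaD : x + a ∈ D
    · refine Or.inl (Finset.mem_image.2 ⟨x + a, hxaD, ?_⟩)
      simp only [pick]
      rw [if_neg (add_notMem_cdSolutions hF hc1 ha hx), add_assoc, CharTwo.add_self_eq_zero,
        add_zero]
    · have hx0 : x ≠ 0 := fun h => hxD (h ▸ hD0)
      have hxa0 : x + a ≠ 0 := fun h => hxaD (h ▸ hD0)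
      refine Or.inr ((inv_add_add_mul_inv_eq_iff hx0 hxa0).1 ?_)
      rw [← hD _ hxaD, ← hD _ hxD]
      exact hx
  calc S.ncard
      ≤ (↑(D.image pick) ∪ {x | b * x ^ 2 + (a * b + c + 1) * x + a * c = 0} : Set K).ncard :=
        Set.ncard_le_ncard hcover (Set.toFinite _)
    _ ≤ (D.image pick).card + 2 := by
        grw [Set.ncard_union_le, Set.ncard_coe_finset,
          ncard_setOf_quadratic_le_two (mul_ne_zero ha hc0)]
    _ ≤ D.card + 2 := by grw [Finset.card_image_le]

end CharTwo

end Field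

namespace FiniteField

variable {L : Type*} [Field L] [Finite L] [Algebra (ZMod 2) L]

theorem trace_sq (x : L) : Algebra.trace (ZMod 2) L (x ^ 2) = Algebra.trace (ZMod 2) L x := by
  have := Algebra.trace_eq_of_algEquiv (frobeniusAlgEquivOfAlgebraic (ZMod 2) L) x
  rwa [coe_frobeniusAlgEquivOfAlgebraic, ZMod.card] at this

variable (L) in
def sqAddSelf : L →ₗ[ZMod 2] L :=
  have := charP_of_injective_algebraMap' (ZMod 2) (A := L) 2
  { toFun x := x ^ 2 + x
    map_add' x y := by rw [CharTwo.add_sq]; ring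
    map_smul' m x := by
      rw [RingHom.id_apply, smul_pow, ZMod.pow_card, smul_add] }

theorem finrank_ker_sqAddSelf : Module.finrank (ZMod 2) (LinearMap.ker (sqAddSelf L)) = 1 := by
  have := charP_of_injective_algebraMap' (ZMod 2) (A := L) 2
  suffices LinearMap.ker (sqAddSelf L) = (ZMod 2) ∙ (1 : L) by
    rw [this, finrank_span_singleton one_ne_zero]
  ext x
  simp only [LinearMap.mem_ker, sqAddSelf, LinearMap.coe_mk, AddHom.coe_mk,
    Submodule.mem_span_singleton]
  constructor
  · intro hx
    have : x * (x + 1) = 0 := by linear_combination hx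
    rcases mul_eq_zero.1 this with h | h
    · exact ⟨0, by simp [h]⟩
    · exact ⟨1, by simp [(CharTwo.add_eq_zero.1 h).symm]⟩
  · rintro ⟨m, rfl⟩
    rw [smul_pow, ZMod.pow_card, one_pow, CharTwo.add_self_eq_zero]

theorem range_sqAddSelf :
    LinearMap.range (sqAddSelf L) = LinearMap.ker (Algebra.trace (ZMod 2) L) := by
  have := charP_of_injective_algebraMap' (ZMod 2) (A := L) 2
  refine Submodule.eq_of_le_of_finrank_eq ?_ ?_
  · rintro _ ⟨y, rfl⟩
    simp [sqAddSelf, trace_sq, CharTwo.add_self_eq_zero]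
  · have h1 := LinearMap.finrank_range_add_finrank_ker (sqAddSelf L)
    have h2 := Module.Dual.finrank_ker_add_one_of_ne_zero (Algebra.trace_ne_zero (ZMod 2) L)
    rw [finrank_ker_sqAddSelf] at h1
    omega

theorem exists_sq_add_self_eq_iff_trace_eq_zero (d : L) :
    (∃ y, y ^ 2 + y = d) ↔ Algebra.trace (ZMod 2) L d = 0 := by
  rw [← LinearMap.mem_ker, ← range_sqAddSelf]
  rfl

end FiniteField

section Cycle

variable {n : ℕ} {γ : GaloisField 2 n}

@[simp]
theorem cyc_zero : cyc n γ 0 = 1 := by simp [cyc]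

@[simp]
theorem cyc_one : cyc n γ 1 = γ := by simp [cyc]

theorem cyc_self (hγ0 : γ ≠ 0) (hγ1 : γ ≠ 1) : cyc n γ γ = 0 := by simp [cyc, hγ0, hγ1]

theorem cyc_of_notMem {x : GaloisField 2 n} (hx : x ∉ ({0, 1, γ} : Finset _)) :
    cyc n γ x = x := by
  simp only [Finset.mem_insert, Finset.mem_singleton, not_or] at hx
  simp [cyc, hx]

theorem cyc_injective (hγ0 : γ ≠ 0) (hγ1 : γ ≠ 1) : Injective (cyc n γ) := by
  intro x y h
  unfold cyc at h
  split_ifs at h <;> simp_all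

theorem inv_cyc_injective (hγ0 : γ ≠ 0) (hγ1 : γ ≠ 1) : Injective fun x => (cyc n γ x)⁻¹ :=
  inv_injective.comp (cyc_injective hγ0 hγ1)

theorem ncard_cdSolutions_inv_cyc_le {c : GaloisField 2 n} (hγ0 : γ ≠ 0) (hγ1 : γ ≠ 1)
    (hc0 : c ≠ 0) (hc1 : c ≠ 1) (a b : GaloisField 2 n) :
    (cdSolutions (fun x => (cyc n γ x)⁻¹) c a b).ncard ≤ 5 :=
  calc _ ≤ ({0, 1, γ} : Finset _).card + 2 :=
        ncard_cdSolutions_le (inv_cyc_injective hγ0 hγ1) (by simp)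
          (fun x hx => congrArg Inv.inv (cyc_of_notMem hx)) hc0 hc1 a b
    _ ≤ 5 := by grw [Finset.card_le_three]

end Cycle

section Witness

variable {n : ℕ} {γ r : GaloisField 2 n}

theorem add_inv_notMem_of_mem (hγ0 : γ ≠ 0) (hγ1 : γ ≠ 1) (hγ4 : γ ^ 2 + γ + 1 ≠ 0)
    {p : GaloisField 2 n} (hp : p ∈ ({0, 1, γ} : Finset _)) :
    p + γ⁻¹ ∉ ({0, 1, γ} : Finset (GaloisField 2 n)) := by
  simp only [Finset.mem_insert, Finset.mem_singleton] at hp ⊢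
  rcases hp with rfl | rfl | rfl <;> rintro (h | h | h) <;> grind

theorem root_notMem (hγ0 : γ ≠ 0) (hγ1 : γ ≠ 1) (hr : r ^ 2 + γ * (γ + 1) * r + γ = 0) :
    r ∉ ({0, 1, γ} : Finset (GaloisField 2 n)) := by
  have hγ1' : γ + 1 ≠ 0 := mt CharTwo.add_eq_zero.1 hγ1
  simp only [Finset.mem_insert, Finset.mem_singleton]
  rintro (rfl | rfl | rfl)
  · exact hγ0 (by simpa using hr)
  · exact pow_ne_zero 2 hγ1' (by grind)
  · exact mul_ne_zero hγ0 (pow_ne_zero 2 hγ1') (by grind)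

theorem root_add_inv_notMem (hγ0 : γ ≠ 0) (hγ1 : γ ≠ 1) (hp1 : γ ^ 4 + γ ^ 3 + 1 ≠ 0)
    (hp2 : γ ^ 5 + γ ^ 2 + 1 ≠ 0) (hr : r ^ 2 + γ * (γ + 1) * r + γ = 0) :
    r + γ⁻¹ ∉ ({0, 1, γ} : Finset (GaloisField 2 n)) := by
  have hγ1' : γ + 1 ≠ 0 := mt CharTwo.add_eq_zero.1 hγ1
  simp only [Finset.mem_insert, Finset.mem_singleton]
  rintro (h | h | h)
  · exact pow_ne_zero 2 hγ1' (by grind)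
  · exact hp1 (by grind)
  · exact hp2 (by grind)

theorem quadratic_witness_eq (hγ0 : γ ≠ 0) (hγ1 : γ ≠ 1) (x : GaloisField 2 n) :
    γ / (γ ^ 2 + 1) * x ^ 2 + (γ⁻¹ * (γ / (γ ^ 2 + 1)) + γ ^ 3 / (γ + 1) ^ 2 + 1) * x
        + γ⁻¹ * (γ ^ 3 / (γ + 1) ^ 2) = γ / (γ + 1) ^ 2 * (x ^ 2 + γ * (γ + 1) * x + γ) := by
  have hγ1' : γ + 1 ≠ 0 := mt CharTwo.add_eq_zero.1 hγ1
  rw [sq_add_one_eq_add_one_sq]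
  field_simp
  grind

theorem mem_cdSolutions_inv_cyc_witness (hγ0 : γ ≠ 0) (hγ1 : γ ≠ 1) (hγ4 : γ ^ 2 + γ + 1 ≠ 0)
    {p : GaloisField 2 n} (hp : p ∈ ({0, 1, γ} : Finset _)) :
    p ∈ cdSolutions (fun x => (cyc n γ x)⁻¹) (γ ^ 3 / (γ + 1) ^ 2) γ⁻¹ (γ / (γ ^ 2 + 1)) := by
  have hγ1' : γ + 1 ≠ 0 := mt CharTwo.add_eq_zero.1 hγ1
  rw [mem_cdSolutions, cyc_of_notMem (add_inv_notMem_of_mem hγ0 hγ1 hγ4 hp),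
    sq_add_one_eq_add_one_sq]
  simp only [Finset.mem_insert, Finset.mem_singleton] at hp
  rcases hp with rfl | rfl | rfl
  · rw [cyc_zero]; field_simp; grind
  · rw [cyc_one]; field_simp; grind
  · rw [cyc_self hγ0 hγ1]; field_simp; grind

theorem cdSolutions_inv_cyc_eq (hγ0 : γ ≠ 0) (hγ1 : γ ≠ 1) (hγ4 : γ ^ 2 + γ + 1 ≠ 0)
    (hc1 : γ ^ 3 / (γ + 1) ^ 2 ≠ 1) (hp1 : γ ^ 4 + γ ^ 3 + 1 ≠ 0) (hp2 : γ ^ 5 + γ ^ 2 + 1 ≠ 0)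
    (hr : r ^ 2 + γ * (γ + 1) * r + γ = 0) :
    cdSolutions (fun x => (cyc n γ x)⁻¹) (γ ^ 3 / (γ + 1) ^ 2) γ⁻¹ (γ / (γ ^ 2 + 1)) =
      {0, 1, γ, r, r + γ * (γ + 1)} := by
  set S := cdSolutions (fun x => (cyc n γ x)⁻¹) (γ ^ 3 / (γ + 1) ^ 2) γ⁻¹ (γ / (γ ^ 2 + 1))
  have hγ1sq : (γ + 1) ^ 2 ≠ 0 := pow_ne_zero 2 (mt CharTwo.add_eq_zero.1 hγ1)
  have hD : ∀ p ∈ ({0, 1, γ} : Finset _), p ∈ S := fun p =>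
    mem_cdSolutions_inv_cyc_witness hγ0 hγ1 hγ4
  have hquad : ∀ x ∉ ({0, 1, γ} : Finset _), x + γ⁻¹ ∉ ({0, 1, γ} : Finset _) →
      (x ∈ S ↔ x = r ∨ x = r + γ * (γ + 1)) := by
    intro x hxD hxaD
    rw [mem_cdSolutions, cyc_of_notMem hxD, cyc_of_notMem hxaD,
      inv_add_add_mul_inv_eq_iff (fun h => hxD (by simp [h])) (fun h => hxaD (by simp [h])),
      quadratic_witness_eq hγ0 hγ1, mul_eq_zero,
      or_iff_right (div_ne_zero hγ0 hγ1sq), sq_add_mul_add_eq_zero_iff hr]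
  have hr' := (sq_add_mul_add_eq_zero_iff (x := r + γ * (γ + 1)) hr).2 (Or.inr rfl)
  apply Set.Subset.antisymm
  · intro x hx
    by_cases hxD : x ∈ ({0, 1, γ} : Finset _)
    · simp only [Finset.mem_insert, Finset.mem_singleton] at hxD
      rcases hxD with rfl | rfl | rfl <;> simp
    by_cases hxaD : x + γ⁻¹ ∈ ({0, 1, γ} : Finset _)
    · refine absurd hx ?_
      simpa only [add_assoc, CharTwo.add_self_eq_zero, add_zero] using
        add_notMem_cdSolutions (inv_cyc_injective hγ0 hγ1) hc1
          (inv_ne_zero hγ0) (hD _ hxaD)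
    · rcases (hquad x hxD hxaD).1 hx with rfl | rfl <;> simp
  · rintro x (h | h | h | h | h) <;> subst x
    · exact hD 0 (by simp)
    · exact hD 1 (by simp)
    · exact hD γ (by simp)
    · exact (hquad r (root_notMem hγ0 hγ1 hr) (root_add_inv_notMem hγ0 hγ1 hp1 hp2 hr)).2
        (Or.inl rfl)
    · exact (hquad _ (root_notMem hγ0 hγ1 hr') (root_add_inv_notMem hγ0 hγ1 hp1 hp2 hr')).2
        (Or.inr rfl)

theorem ncard_cdSolutions_inv_cyc_witness (hγ0 : γ ≠ 0) (hγ1 : γ ≠ 1)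
    (hγ4 : γ ^ 2 + γ + 1 ≠ 0) (hc1 : γ ^ 3 / (γ + 1) ^ 2 ≠ 1) (hp1 : γ ^ 4 + γ ^ 3 + 1 ≠ 0)
    (hp2 : γ ^ 5 + γ ^ 2 + 1 ≠ 0) (hr : r ^ 2 + γ * (γ + 1) * r + γ = 0) :
    (cdSolutions (fun x => (cyc n γ x)⁻¹) (γ ^ 3 / (γ + 1) ^ 2) γ⁻¹ (γ / (γ ^ 2 + 1))).ncard
      = 5 := by
  have hr' := (sq_add_mul_add_eq_zero_iff (x := r + γ * (γ + 1)) hr).2 (Or.inr rfl)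
  have hrD := root_notMem hγ0 hγ1 hr
  have hr'D := root_notMem hγ0 hγ1 hr'
  simp only [Finset.mem_insert, Finset.mem_singleton, not_or] at hrD hr'D
  have hrr' : r ≠ r + γ * (γ + 1) := by
    simpa using mul_ne_zero hγ0 (mt CharTwo.add_eq_zero.1 hγ1)
  rw [cdSolutions_inv_cyc_eq hγ0 hγ1 hγ4 hc1 hp1 hp2 hr, Set.ncard_insert_of_notMem,
    Set.ncard_insert_of_notMem, Set.ncard_insert_of_notMem, Set.ncard_pair hrr']
  all_goals simp only [Set.mem_insert_iff, Set.mem_singleton_iff, not_or]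
  all_goals grind

end Witness

theorem cdCount_eq_ncard (n : ℕ) (F : GaloisField 2 n → GaloisField 2 n)
    (c a b : GaloisField 2 n) :
    cdCount n F c a b = (cdSolutions F c a b).ncard :=
  Nat.card_coe_set_eq _

theorem cdu_eq_of_forall_le {n k : ℕ} {F : GaloisField 2 n → GaloisField 2 n}
    {c : GaloisField 2 n} (hle : ∀ a b, cdCount n F c a b ≤ k) {a b : GaloisField 2 n}
    (ha : c = 1 → a ≠ 0) (hk : cdCount n F c a b = k) : cdu n F c = k :=
  IsGreatest.csSup_eq ⟨⟨a, b, ha, hk.symm⟩, by rintro _ ⟨a, b, -, rfl⟩; exact hle a b⟩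

theorem stmt_19_general (n : ℕ) (γ c : GaloisField 2 n)
    (hγ0 : γ ≠ 0) (hγ1 : γ ≠ 1) (hc0 : c ≠ 0) (hc1 : c ≠ 1)
    (hγ4 : γ ^ 2 + γ + 1 ≠ 0)
    (hceq : c = γ ^ 3 / (γ + 1) ^ 2)
    (htr : Algebra.trace (ZMod 2) (GaloisField 2 n) (1 / (γ * (γ + 1) ^ 2)) = 0)
    (hp1 : γ ^ 4 + γ ^ 3 + 1 ≠ 0)
    (hp2 : γ ^ 5 + γ ^ 2 + 1 ≠ 0)
    (F : GaloisField 2 n → GaloisField 2 n) (hF : F = fun x => (cyc n γ x)⁻¹) :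
    cdu n F c = 5 ∧
      cdCount n F c γ⁻¹ (γ / (γ ^ 2 + 1)) = 5 := by
  subst hF hceq
  obtain ⟨y, hy⟩ := (FiniteField.exists_sq_add_self_eq_iff_trace_eq_zero _).2 htr
  have hr : (γ * (γ + 1) * y) ^ 2 + γ * (γ + 1) * (γ * (γ + 1) * y) + γ = 0 := by
    have hγ1' : γ + 1 ≠ 0 := mt CharTwo.add_eq_zero.1 hγ1
    have hy' : (y ^ 2 + y) * (γ * (γ + 1) ^ 2) = 1 := by
      rw [hy, one_div, inv_mul_cancel₀ (mul_ne_zero hγ0 (pow_ne_zero 2 hγ1'))]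
    linear_combination γ * hy' + γ * (CharTwo.two_eq_zero : (2 : GaloisField 2 n) = 0)
  have hcount : cdCount n (fun x => (cyc n γ x)⁻¹) (γ ^ 3 / (γ + 1) ^ 2) γ⁻¹ (γ / (γ ^ 2 + 1))
      = 5 := by
    rw [cdCount_eq_ncard, ncard_cdSolutions_inv_cyc_witness hγ0 hγ1 hγ4 hc1 hp1 hp2 hr]
  refine ⟨cdu_eq_of_forall_le (fun a b => ?_) (fun h => absurd h hc1) hcount, hcount⟩
  rw [cdCount_eq_ncard]
  exact ncard_cdSolutions_inv_cyc_le hγ0 hγ1 hc0 hc1 a b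

theorem stmt_19 (n : ℕ) (hn : 4 ≤ n) (γ c : GaloisField 2 n)
    (hγ0 : γ ≠ 0) (hγ1 : γ ≠ 1) (hc0 : c ≠ 0) (hc1 : c ≠ 1)
    (hγ4 : γ ^ 2 + γ + 1 ≠ 0)
    (hceq : c = γ ^ 3 / (γ + 1) ^ 2)
    (htr : Algebra.trace (ZMod 2) (GaloisField 2 n) (1 / (γ * (γ + 1) ^ 2)) = 0)
    (hp1 : γ ^ 4 + γ ^ 3 + 1 ≠ 0)
    (hp2 : γ ^ 5 + γ ^ 2 + 1 ≠ 0)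
    (F : GaloisField 2 n → GaloisField 2 n) (hF : F = fun x => (cyc n γ x)⁻¹) :
    cdu n F c = 5 ∧
      cdCount n F c γ⁻¹ (γ / (γ ^ 2 + 1)) = 5 :=
  stmt_19_general n γ c hγ0 hγ1 hc0 hc1 hγ4 hceq htr hp1 hp2 F hF
end
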